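/- arXiv:2406.14125 — 7 statements merged into one kernel-verified Lean document; each statement's English description precedes it below -/
import Mathlib

section
/- Let t ≥ 1 and n ≥ 2t+2 be integers, and let x and x' be two distinct binary words of length n. Suppose D and D' are sets of deletion vectors for length-n words, each vector of weight at most t, with |D| = |D'| = N, such that the output set of D on x equals the output set of D' on x'. Then N ≤ V_2(n,t) − V_2(⌈n/2⌉ − 1, t). (Equivalently, if N ≥ V_2(n,t) − V_2(⌈n/2⌉−1,t) + 1 distinct deletion vectors of weight at most t are applied, the set of output words uniquely determines the transmitted binary word.) -/
/-- Applying a deletion vector `S` (a set of coordinate positions) to a word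
`x` of length `n`: delete the entries at positions in `S`, keeping the rest in order. -/
def delWord {q n : ℕ} (x : Fin n → Fin q) (S : Finset (Fin n)) : List (Fin q) :=
  ((Finset.univ \ S).sort (· ≤ ·)).map x

/-- Binary Hamming ball volume `V₂(n,t) = ∑_{i=0}^{t} C(n,i)`. -/
def V₂ (n t : ℕ) : ℕ := ∑ i ∈ Finset.range (t + 1), n.choose i

/-!
Reading a word as the list of its letters, a deletion pattern `S` with `S ⊆ Kᶜ` keeps the
subword of `x` on the positions `K`. If that subword is not a subword of `x'`, then every
`S ∈ D` must meet `K`, because `del(x, S)` is an output of `x'` and hence a subword of `x'`;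
at most `V₂(n,t) - V₂(n - |K|, t)` sets of size at most `t` do so.

For distinct binary words of equal length one finds a subword `w` of `x` that is not one of
`x'` and a subword `w'` of `x'` that is not one of `x`, with `|w| + |w'| ≤ n + 2`; the shorter
of the two has length at most `n / 2 + 1`, which gives the bound. If the weights differ, take
runs of a single letter one longer than the other word contains. If the weights agree and the
words first differ as `x = u σ x₂`, `x' = u τ y₂`, take `w = σ^(|u|_σ + 1) τ^c`: in `x'` the
`σ`-run cannot be embedded before the first `σ` of `y₂`, and `c` is one more than the number
of `τ`s after that letter.
-/

namespace List

variable {α : Type*}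

theorem sublist_of_append_sublist_append_cons {u v l₁ l₂ : List α} {c : α}
    (h : u ++ v <+ l₁ ++ c :: l₂) (hu : ¬ u <+ l₁) : v <+ l₂ := by
  obtain ⟨r₁, r₂, hr, hu₁, hv₂⟩ := append_sublist_iff.mp h
  rcases append_eq_append_iff.mp hr with ⟨m, rfl, hm⟩ | ⟨m, rfl, -⟩
  · cases m with
    | nil => exact absurd (by simpa using hu₁) hu
    | cons d m =>
      obtain ⟨-, rfl⟩ := cons_eq_cons.mp hm
      exact hv₂.trans (sublist_append_right m r₂)
  · exact absurd (hu₁.trans (sublist_append_left r₁ m)) hu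

theorem exists_eq_append_cons_of_ne {x y : List α} (hlen : x.length = y.length) (hne : x ≠ y) :
    ∃ u a b x₂ y₂, a ≠ b ∧ x = u ++ a :: x₂ ∧ y = u ++ b :: y₂ := by
  induction x generalizing y with
  | nil => exact absurd (eq_nil_of_length_eq_zero hlen.symm).symm hne
  | cons a x ih =>
    obtain _ | ⟨b, y⟩ := y
    · simp at hlen
    by_cases hab : a = b
    · subst hab
      obtain ⟨u, c, d, x₂, y₂, hcd, rfl, rfl⟩ :=
        ih (by simpa using hlen) (fun h => hne (h ▸ rfl))
      exact ⟨a :: u, c, d, x₂, y₂, hcd, rfl, rfl⟩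
    · exact ⟨[], a, b, x, y, hab, rfl, rfl⟩

theorem count_add_count_of_ne {σ τ : Fin 2} (hστ : σ ≠ τ) (l : List (Fin 2)) :
    count σ l + count τ l = l.length := by
  induction l with
  | nil => rfl
  | cons a l ih => fin_cases σ <;> fin_cases τ <;> fin_cases a <;> simp_all <;> omega

end List

section Binary

open List

theorem exists_sublist_not_sublist_of_count_lt {x y : List (Fin 2)} (hlen : x.length = y.length)
    (h : count 1 y < count 1 x) :
    ∃ w w', w <+ x ∧ ¬ w <+ y ∧ w' <+ y ∧ ¬ w' <+ x ∧ w.length + w'.length ≤ x.length + 2 := by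
  have hx := count_add_count_of_ne one_ne_zero x
  have hy := count_add_count_of_ne one_ne_zero y
  refine ⟨replicate (count 1 y + 1) 1, replicate (count 0 x + 1) 0, ?_, ?_, ?_, ?_, ?_⟩ <;>
    simp only [replicate_sublist_iff, length_replicate] <;> omega

theorem exists_sublist_not_sublist_of_eq_append_cons {σ τ : Fin 2} (hστ : σ ≠ τ)
    {u x₂ y₂ : List (Fin 2)} (hlen : x₂.length = y₂.length)
    (hcount : count σ (u ++ σ :: x₂) = count σ (u ++ τ :: y₂)) :
    ∃ w, w <+ u ++ σ :: x₂ ∧ ¬ w <+ u ++ τ :: y₂ ∧ w.length ≤ count σ u + count τ x₂ + 1 := by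
  have hσy₂ : count σ y₂ = count σ x₂ + 1 := by
    simp [count_append, hστ.symm] at hcount
    omega
  obtain ⟨m, y₃, rfl, hm⟩ :=
    eq_append_cons_of_mem (count_pos_iff.mp (by omega : 0 < count σ y₂))
  have hmσ : count σ m = 0 := count_eq_zero.mpr hm
  have hx₂ := count_add_count_of_ne hστ x₂
  have hy₃ := count_add_count_of_ne hστ y₃
  simp only [count_append, count_cons_self, length_append, length_cons] at hσy₂ hlen
  have hτ : count τ y₃ + 1 ≤ count τ x₂ := by omega
  refine ⟨replicate (count σ u + 1) σ ++ replicate (count τ y₃ + 1) τ, ?_, fun h => ?_,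
    by simp; omega⟩
  · rw [← singleton_append, ← append_assoc]
    exact (replicate_sublist_iff.mpr (by simp)).append (replicate_sublist_iff.mpr hτ)
  · rw [show u ++ τ :: (m ++ σ :: y₃) = (u ++ τ :: m) ++ σ :: y₃ by simp] at h
    have hrun : ¬ replicate (count σ u + 1) σ <+ u ++ τ :: m := by
      simp [replicate_sublist_iff, count_append, hστ.symm, hmσ]
    have := replicate_sublist_iff.mp (sublist_of_append_sublist_append_cons h hrun)
    omega

theorem exists_sublist_not_sublist_of_ne {x y : List (Fin 2)} (hlen : x.length = y.length)
    (hne : x ≠ y) :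
    ∃ w w', w <+ x ∧ ¬ w <+ y ∧ w' <+ y ∧ ¬ w' <+ x ∧ w.length + w'.length ≤ x.length + 2 := by
  rcases lt_trichotomy (count 1 y) (count 1 x) with h | h | h
  · exact exists_sublist_not_sublist_of_count_lt hlen h
  · have hcount (σ : Fin 2) : count σ x = count σ y := by
      have hx := count_add_count_of_ne one_ne_zero x
      have hy := count_add_count_of_ne one_ne_zero y
      fin_cases σ <;> simp only [Fin.zero_eta, Fin.mk_one] <;> omega
    obtain ⟨u, σ, τ, x₂, y₂, hστ, rfl, rfl⟩ := exists_eq_append_cons_of_ne hlen hne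
    have hlen₂ : x₂.length = y₂.length := by simpa using hlen
    obtain ⟨w, hwx, hwy, hw⟩ :=
      exists_sublist_not_sublist_of_eq_append_cons hστ hlen₂ (hcount σ)
    obtain ⟨w', hw'y, hw'x, hw'⟩ :=
      exists_sublist_not_sublist_of_eq_append_cons hστ.symm hlen₂.symm (hcount τ).symm
    have hσ := hcount σ
    have hu := count_add_count_of_ne hστ u
    have hx₂ := count_add_count_of_ne hστ x₂
    simp only [count_append, count_cons_self, count_cons, beq_iff_eq, hστ.symm, if_false] at hσ
    refine ⟨w, w', hwx, hwy, hw'y, hw'x, ?_⟩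
    simp only [length_append, length_cons]
    omega
  · obtain ⟨w, w', hwy, hwx, hw'x, hw'y, hlen'⟩ :=
      exists_sublist_not_sublist_of_count_lt hlen.symm h
    exact ⟨w', w, hw'x, hw'y, hwy, hwx, by omega⟩

end Binary

section Counting

open Finset

theorem card_filter_powerset_card_le {α : Type*} (s : Finset α) (t : ℕ) :
    #(s.powerset.filter (#· ≤ t)) = V₂ #s t := by
  classical
  rw [card_eq_sum_card_fiberwise (f := card) (t := range (t + 1))
    fun S hS => mem_range.mpr (Nat.lt_succ_of_le (mem_filter.mp hS).2)]
  refine sum_congr rfl fun i hi => ?_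
  rw [← card_powersetCard i s, powersetCard_eq_filter, filter_filter]
  congr 1
  exact filter_congr fun S _ =>
    ⟨fun h => h.2, fun h => ⟨h ▸ Nat.le_of_lt_succ (mem_range.mp hi), h⟩⟩

theorem V₂_mono {a b : ℕ} (t : ℕ) (h : a ≤ b) : V₂ a t ≤ V₂ b t :=
  Finset.sum_le_sum fun i _ => Nat.choose_le_choose i h

theorem card_le_V₂_sub_of_not_subset_compl {α : Type*} [Fintype α] [DecidableEq α]
    {D : Finset (Finset α)} {K : Finset α} {t : ℕ} (hD : ∀ S ∈ D, #S ≤ t ∧ ¬ S ⊆ Kᶜ) :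
    #D ≤ V₂ (Fintype.card α) t - V₂ (Fintype.card α - #K) t := by
  set B := Kᶜ.powerset.filter (#· ≤ t)
  have hdisj : Disjoint D B :=
    disjoint_left.mpr fun S hS hSB => (hD S hS).2 (mem_powerset.mp (mem_filter.mp hSB).1)
  have hunion : D ∪ B ⊆ univ.powerset.filter (#· ≤ t) := by
    intro S hS
    rcases mem_union.mp hS with hS | hS
    · exact mem_filter.mpr ⟨mem_powerset.mpr (subset_univ S), (hD S hS).1⟩
    · exact mem_filter.mpr ⟨mem_powerset.mpr (subset_univ S), (mem_filter.mp hS).2⟩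
  have hcard := card_le_card hunion
  rw [card_union_of_disjoint hdisj, card_filter_powerset_card_le, card_filter_powerset_card_le,
    card_univ, card_compl] at hcard
  omega

end Counting

section Deletion

open Finset List

variable {q n : ℕ} (x : Fin n → Fin q)

theorem delWord_compl (K : Finset (Fin n)) : delWord x Kᶜ = (K.sort (· ≤ ·)).map x := by
  simp [delWord]

theorem delWord_empty : delWord x ∅ = ofFn x := by
  simp [delWord, Fin.sort_univ, ofFn_eq_map]

theorem delWord_sublist_delWord {S T : Finset (Fin n)} (h : S ⊆ T) :
    delWord x T <+ delWord x S := by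
  refine Sublist.map x (sublist_of_subperm_of_pairwise ?_ (pairwise_sort _ _) (pairwise_sort _ _))
  exact (sort_nodup _ _).subperm fun i => by simpa [mem_sort] using fun hiT hiS => hiT (h hiS)

theorem delWord_sublist_ofFn (S : Finset (Fin n)) : delWord x S <+ ofFn x :=
  delWord_empty x ▸ delWord_sublist_delWord x (empty_subset S)

theorem exists_delWord_compl_eq_of_sublist {w : List (Fin q)} (h : w <+ ofFn x) :
    ∃ K : Finset (Fin n), #K = w.length ∧ delWord x Kᶜ = w := by
  rw [ofFn_eq_map, sublist_map_iff] at h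
  obtain ⟨l, hl, rfl⟩ := h
  have hnodup : l.Nodup := hl.nodup (nodup_finRange n)
  refine ⟨l.toFinset, by simp [toFinset_card_of_nodup hnodup], ?_⟩
  have hsorted : l.Pairwise (· ≤ ·) := ((pairwise_lt_finRange n).sublist hl).imp le_of_lt
  rw [delWord_compl, (toFinset_sort _ hnodup).mpr hsorted]

theorem delWord_sublist_of_image_subset {y : Fin n → Fin q} {D D' : Finset (Finset (Fin n))}
    (hout : D.image (delWord x) ⊆ D'.image (delWord y)) {S : Finset (Fin n)} (hS : S ∈ D) :
    delWord x S <+ ofFn y := by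
  obtain ⟨S', -, hS'⟩ := Finset.mem_image.mp (hout (Finset.mem_image_of_mem _ hS))
  exact hS' ▸ delWord_sublist_ofFn y S'

theorem card_le_V₂_sub_of_image_subset {t : ℕ} {y : Fin n → Fin q}
    {D D' : Finset (Finset (Fin n))} {K : Finset (Fin n)} (hK : ¬ delWord x Kᶜ <+ ofFn y)
    (hD : ∀ S ∈ D, #S ≤ t) (hout : D.image (delWord x) ⊆ D'.image (delWord y)) :
    #D ≤ V₂ n t - V₂ (n - #K) t := by
  simpa using card_le_V₂_sub_of_not_subset_compl fun S hS => ⟨hD S hS, fun hSK =>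
    hK ((delWord_sublist_delWord x hSK).trans (delWord_sublist_of_image_subset x hout hS))⟩

end Deletion

theorem deletion_vectors_at_most_t_uniqueness_general
    (t n : ℕ)
    (x x' : Fin n → Fin 2) (hne : x ≠ x')
    (N : ℕ) (D D' : Finset (Finset (Fin n)))
    (hD : ∀ S ∈ D, S.card ≤ t) (hD' : ∀ S ∈ D', S.card ≤ t)
    (hDcard : D.card = N) (hD'card : D'.card = N)
    (hout : D.image (delWord x) = D'.image (delWord x')) :
    N ≤ V₂ n t - V₂ ((n + 1) / 2 - 1) t := by
  obtain ⟨w, w', hw, hwx', hw', hw'x, hlen⟩ :=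
    exists_sublist_not_sublist_of_ne (by simp) (List.ofFn_injective.ne hne)
  obtain ⟨K, hK, rfl⟩ := exists_delWord_compl_eq_of_sublist x hw
  obtain ⟨K', hK', rfl⟩ := exists_delWord_compl_eq_of_sublist x' hw'
  rw [List.length_ofFn] at hlen
  have hmono (m : ℕ) (hm : 2 * m ≤ n + 2) :
      V₂ n t - V₂ (n - m) t ≤ V₂ n t - V₂ ((n + 1) / 2 - 1) t :=
    Nat.sub_le_sub_left (V₂_mono t (by omega)) _
  rcases le_total K.card K'.card with h | h
  · calc N = D.card := hDcard.symm
      _ ≤ V₂ n t - V₂ (n - K.card) t := card_le_V₂_sub_of_image_subset x hwx' hD hout.subset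
      _ ≤ _ := hmono _ (by omega)
  · calc N = D'.card := hD'card.symm
      _ ≤ V₂ n t - V₂ (n - K'.card) t :=
          card_le_V₂_sub_of_image_subset x' hw'x hD' hout.symm.subset
      _ ≤ _ := hmono _ (by omega)

theorem deletion_vectors_at_most_t_uniqueness
    (t n : ℕ) (ht : 1 ≤ t) (hn : 2 * t + 2 ≤ n)
    (x x' : Fin n → Fin 2) (hne : x ≠ x')
    (N : ℕ) (D D' : Finset (Finset (Fin n)))
    (hD : ∀ S ∈ D, S.card ≤ t) (hD' : ∀ S ∈ D', S.card ≤ t)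
    (hDcard : D.card = N) (hD'card : D'.card = N)
    (hout : D.image (delWord x) = D'.image (delWord x')) :
    N ≤ V₂ n t - V₂ ((n + 1) / 2 - 1) t :=
  deletion_vectors_at_most_t_uniqueness_general t n x x' hne N D D' hD hD' hDcard hD'card hout
end

section
/- Let t ≥ 1 and n ≥ 2t+2 be integers, and consider the binary words x = 0^{⌈n/2⌉−1} 1 0^{⌊n/2⌋} and x' = 0^{⌈n/2⌉} 1 0^{⌊n/2⌋−1} of length n. Then there exist sets D and D' of deletion vectors for length-n words, each vector of weight exactly t, with |D| = |D'| = C(n,t) − C(⌈n/2⌉−1, t), such that the output set of D on x equals the output set of D' on x'. In particular, the bound of the uniqueness theorem for deletion vectors of weight exactly t is tight. -/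
open Finset

theorem List.map_piSingle_of_notMem {α M : Type*} [DecidableEq α] [Zero M] {l : List α} {c : α}
    (hc : c ∉ l) (m : M) : l.map (Pi.single c m) = List.replicate l.length 0 :=
  List.eq_replicate_iff.2 ⟨List.length_map _, by
    simp only [List.mem_map]
    rintro _ ⟨i, hi, rfl⟩
    exact Pi.single_eq_of_ne (ne_of_mem_of_not_mem hi hc) (M := fun _ => M) m⟩

theorem List.map_piSingle_of_pairwise_lt {α M : Type*} [LinearOrder α] [Zero M] {l : List α}
    (hl : l.Pairwise (· < ·)) {c : α} (hc : c ∈ l) (m : M) :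
    l.map (Pi.single c m) =
      List.replicate (l.countP (· < c)) 0 ++
        m :: List.replicate (l.length - 1 - l.countP (· < c)) 0 := by
  obtain ⟨s, r, rfl⟩ := List.append_of_mem hc
  obtain ⟨-, hr, hsr⟩ := List.pairwise_append.1 hl
  have hs : ∀ i ∈ s, i < c := fun i hi => hsr i hi c List.mem_cons_self
  have hr : ∀ i ∈ r, c < i := fun _ => List.rel_of_pairwise_cons hr
  have hcount : (s ++ c :: r).countP (· < c) = s.length := by
    rw [List.countP_append, List.countP_eq_length.2 (by simpa using hs),
      List.countP_eq_zero.2 (by simpa using fun i hi => (hr i hi).le)]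
    simp
  rw [hcount, List.map_append, List.map_cons,
    List.map_piSingle_of_notMem (fun h => lt_irrefl c (hs c h)),
    List.map_piSingle_of_notMem (fun h => lt_irrefl c (hr c h)), Pi.single_eq_same]
  simp

theorem List.countP_sort {α : Type*} [LinearOrder α] (s : Finset α) (p : α → Prop)
    [DecidablePred p] :
    (s.sort (· ≤ ·)).countP (fun a => decide (p a)) = #{a ∈ s | p a} := by
  rw [(s.sort_perm_toList (· ≤ ·)).countP_eq, ← Multiset.coe_countP, Finset.coe_toList,
    Multiset.countP_eq_card_filter]
  rfl

def oneAt (m a : ℕ) : List (Fin 2) :=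
  List.replicate a 0 ++ 1 :: List.replicate (m - 1 - a) 0

variable {n : ℕ} {c : Fin n} {S : Finset (Fin n)}

theorem delWord_piSingle_of_mem (hc : c ∈ S) :
    delWord (Pi.single c 1) S = List.replicate (n - #S) (0 : Fin 2) := by
  rw [delWord, List.map_piSingle_of_notMem (by simpa using hc), length_sort,
    card_univ_sdiff, Fintype.card_fin]

theorem card_filter_lt_compl (c : Fin n) (S : Finset (Fin n)) :
    #{i ∈ univ \ S | i < c} = c - #{i ∈ S | i < c} := by
  have h : {i ∈ univ \ S | i < c} = Iio c \ {i ∈ S | i < c} := by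
    ext i
    simp only [mem_filter, mem_sdiff, mem_univ, mem_Iio]
    tauto
  rw [h, card_sdiff_of_subset fun _ hi => mem_Iio.2 (mem_filter.1 hi).2, Fin.card_Iio]

theorem delWord_piSingle_of_notMem (hc : c ∉ S) :
    delWord (Pi.single c 1) S = oneAt (n - #S) (c - #{i ∈ S | i < c}) := by
  have hsort := (sortedLT_sort (univ \ S)).pairwise
  rw [delWord, List.map_piSingle_of_pairwise_lt hsort (by simpa using hc), length_sort,
    card_univ_sdiff, Fintype.card_fin, List.countP_sort, card_filter_lt_compl]
  rfl

def powersetCardNotSubset {α : Type*} [Fintype α] [DecidableEq α] (t : ℕ) (E : Finset α) :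
    Finset (Finset α) :=
  univ.powersetCard t \ E.powersetCard t

section powersetCardNotSubset

variable {α : Type*} [Fintype α] [DecidableEq α] {t : ℕ} {E S : Finset α}

theorem mem_powersetCardNotSubset : S ∈ powersetCardNotSubset t E ↔ #S = t ∧ ¬S ⊆ E := by
  simp only [powersetCardNotSubset, mem_sdiff, mem_powersetCard, subset_univ, true_and]
  tauto

theorem card_powersetCardNotSubset :
    #(powersetCardNotSubset t E) = (Fintype.card α).choose t - (#E).choose t := by
  rw [powersetCardNotSubset, card_sdiff_of_subset (powersetCard_mono (subset_univ E)),
    card_powersetCard, card_powersetCard, card_univ]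

end powersetCardNotSubset

theorem image_delWord_piSingle {t : ℕ} (ht : 1 ≤ t) (htn : t ≤ n) {E : Finset (Fin n)}
    (hcE : c ∉ E) {A : Finset ℕ}
    (hA : ∀ a, a ∈ A ↔
      ∃ S : Finset (Fin n), #S = t ∧ c ∉ S ∧ ¬S ⊆ E ∧ c - #{i ∈ S | i < c} = a) :
    (powersetCardNotSubset t E).image (delWord (Pi.single c 1)) =
      insert (List.replicate (n - t) 0) (A.image (oneAt (n - t))) := by
  ext w
  simp only [mem_image, mem_insert, mem_powersetCardNotSubset]
  constructor
  · rintro ⟨S, ⟨hS, hSE⟩, rfl⟩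
    by_cases hc : c ∈ S
    · exact Or.inl (by rw [delWord_piSingle_of_mem hc, hS])
    · exact Or.inr ⟨_, (hA _).2 ⟨S, hS, hc, hSE, rfl⟩, by rw [delWord_piSingle_of_notMem hc, hS]⟩
  · rintro (rfl | ⟨a, ha, rfl⟩)
    · obtain ⟨S, hcS, -, hS⟩ := exists_subsuperset_card_eq (n := t) (subset_univ {c})
        (by rwa [card_singleton]) (by rwa [card_univ, Fintype.card_fin])
      exact ⟨S, ⟨hS, fun h => hcE (h (singleton_subset_iff.1 hcS))⟩,
        by rw [delWord_piSingle_of_mem (singleton_subset_iff.1 hcS), hS]⟩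
    · obtain ⟨S, hS, hc, hSE, rfl⟩ := (hA a).1 ha
      exact ⟨S, ⟨hS, hSE⟩, by rw [delWord_piSingle_of_notMem hc, hS]⟩

theorem exists_notMem_card_filter_lt_eq {U₀ V₀ : Finset (Fin n)} (hU₀ : U₀ ⊆ Iio c)
    (hV₀ : V₀ ⊆ Ioi c) {j k : ℕ} (hj : #U₀ ≤ j) (hjc : j ≤ c) (hk : #V₀ ≤ k)
    (hkc : k ≤ n - 1 - c) :
    ∃ S : Finset (Fin n), U₀ ∪ V₀ ⊆ S ∧ c ∉ S ∧ #S = j + k ∧ #{i ∈ S | i < c} = j := by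
  obtain ⟨U, hU₀U, hU, rfl⟩ := exists_subsuperset_card_eq hU₀ hj (by rwa [Fin.card_Iio])
  obtain ⟨V, hV₀V, hV, rfl⟩ := exists_subsuperset_card_eq hV₀ hk (by rwa [Fin.card_Ioi])
  have hUc : ∀ i ∈ U, i < c := fun i hi => mem_Iio.1 (hU hi)
  have hVc : ∀ i ∈ V, c < i := fun i hi => mem_Ioi.1 (hV hi)
  refine ⟨U ∪ V, union_subset_union hU₀U hV₀V, ?_, ?_, ?_⟩
  · simp only [mem_union, not_or]
    exact ⟨fun h => lt_irrefl c (hUc c h), fun h => lt_irrefl c (hVc c h)⟩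
  · exact card_union_of_disjoint (disjoint_left.2 fun i hiU hiV => (hUc i hiU).asymm (hVc i hiV))
  · rw [filter_union, filter_true_of_mem hUc, filter_false_of_mem fun i hi => (hVc i hi).asymm,
      union_empty]

theorem card_filter_lt_le (c : Fin n) (S : Finset (Fin n)) : #{i ∈ S | i < c} ≤ c :=
  (card_le_card fun _ hi => mem_Iio.2 (mem_filter.1 hi).2).trans_eq (Fin.card_Iio c)

theorem mem_Icc_iff_exists_position_of_Iio_subset {t : ℕ} (htn : c + t < n)
    {E : Finset (Fin n)} (hE : Iio c ⊆ E) {d : Fin n} (hcd : c < d) (hdE : d ∉ E) (a : ℕ) :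
    a ∈ Icc (c + 1 - t) c ↔
      ∃ S : Finset (Fin n), #S = t ∧ c ∉ S ∧ ¬S ⊆ E ∧ c - #{i ∈ S | i < c} = a := by
  rw [mem_Icc]
  constructor
  · rintro ⟨hlo, hhi⟩
    obtain ⟨S, hdS, hc, hS, hSc⟩ := exists_notMem_card_filter_lt_eq (empty_subset (Iio c))
      (singleton_subset_iff.2 (mem_Ioi.2 hcd)) (j := c - a) (k := t - (c - a))
      (by simp) (by omega) (by simp; omega) (by omega)
    exact ⟨S, by omega, hc, fun h => hdE (h (hdS (by simp))), by omega⟩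
  · rintro ⟨S, rfl, hc, hSE, rfl⟩
    obtain ⟨e, heS, heE⟩ := not_subset.1 hSE
    have hce : c < e := lt_of_le_of_ne (not_lt.1 fun h => heE (hE (mem_Iio.2 h)))
      fun h => hc (h ▸ heS)
    have hlt : #{i ∈ S | i < c} < #S := card_lt_card
      ⟨filter_subset _ S, fun h => (mem_filter.1 (h heS)).2.asymm hce⟩
    have := card_filter_lt_le c S
    omega

theorem mem_Icc_iff_exists_position_of_Ioi_subset {t : ℕ} (htn : c + t ≤ n)
    {E : Finset (Fin n)} (hE : Ioi c ⊆ E) {d : Fin n} (hdc : d < c) (hdE : d ∉ E) (a : ℕ) :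
    a ∈ Icc (c - t) (c - 1) ↔
      ∃ S : Finset (Fin n), #S = t ∧ c ∉ S ∧ ¬S ⊆ E ∧ c - #{i ∈ S | i < c} = a := by
  have hd : (d : ℕ) < c := hdc
  rw [mem_Icc]
  constructor
  · rintro ⟨hlo, hhi⟩
    obtain ⟨S, hdS, hc, hS, hSc⟩ := exists_notMem_card_filter_lt_eq
      (singleton_subset_iff.2 (mem_Iio.2 hdc)) (empty_subset (Ioi c)) (j := c - a)
      (k := t - (c - a)) (by simp; omega) (by omega) (by simp) (by omega)
    exact ⟨S, by omega, hc, fun h => hdE (h (hdS (by simp))), by omega⟩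
  · rintro ⟨S, rfl, hc, hSE, rfl⟩
    obtain ⟨e, heS, heE⟩ := not_subset.1 hSE
    have hec : e < c := lt_of_le_of_ne (not_lt.1 fun h => heE (hE (mem_Ioi.2 h)))
      fun h => hc (h ▸ heS)
    have hpos : 0 < #{i ∈ S | i < c} := card_pos.2 ⟨e, mem_filter.2 ⟨heS, hec⟩⟩
    have := card_filter_le S (· < c)
    have := card_filter_lt_le c S
    omega

/-- Tightness for deletion vectors of weight exactly `t`:
`x = 0^{⌈n/2⌉-1} 1 0^{⌊n/2⌋}` has its single `1` at (0-indexed) position `⌈n/2⌉ - 1 = (n+1)/2 - 1`,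
and `x' = 0^{⌈n/2⌉} 1 0^{⌊n/2⌋-1}` has its single `1` at position `⌈n/2⌉ = (n+1)/2`. -/
theorem deletion_vectors_exactly_t_tightness
    (t n : ℕ) (ht : 1 ≤ t) (hn : 2 * t + 2 ≤ n) :
    ∃ D D' : Finset (Finset (Fin n)),
      (∀ S ∈ D, S.card = t) ∧ (∀ S ∈ D', S.card = t) ∧
      D.card = n.choose t - ((n + 1) / 2 - 1).choose t ∧
      D'.card = n.choose t - ((n + 1) / 2 - 1).choose t ∧
      D.image (delWord (fun i : Fin n => if (i : ℕ) = (n + 1) / 2 - 1 then (1 : Fin 2) else 0)) =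
        D'.image (delWord (fun i : Fin n => if (i : ℕ) = (n + 1) / 2 then (1 : Fin 2) else 0)) := by
  have hword (m : ℕ) (hm : m < n) :
      (fun i : Fin n => if (i : ℕ) = m then (1 : Fin 2) else 0) = Pi.single ⟨m, hm⟩ 1 := by
    funext i
    simp only [Pi.single_apply, Fin.ext_iff]
  rw [hword _ (by omega), hword _ (by omega)]
  set c : Fin n := ⟨(n + 1) / 2 - 1, by omega⟩
  set c' : Fin n := ⟨(n + 1) / 2, by omega⟩
  have hc : (c : ℕ) = (n + 1) / 2 - 1 := rfl
  have hc' : (c' : ℕ) = (n + 1) / 2 := rfl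
  have hcc' : c < c' := Fin.mk_lt_mk.2 (by omega)
  -- `Ioi c'` has `c` or `c - 1` elements according to the parity of `n`; pad it to `c` elements
  obtain ⟨E', hIoiE', hE'cc', hE'⟩ := exists_subsuperset_card_eq (n := (n + 1) / 2 - 1)
    (s := Ioi c') (t := {c, c'}ᶜ)
    (fun i hi => by
      simp only [mem_compl, mem_insert, mem_singleton, not_or]
      exact ⟨(hcc'.trans (mem_Ioi.1 hi)).ne', (mem_Ioi.1 hi).ne'⟩)
    (by rw [Fin.card_Ioi, hc']; omega)
    (by rw [card_compl, card_pair hcc'.ne, Fintype.card_fin]; omega)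
  have hcE' : c ∉ E' := fun h => by simpa using hE'cc' h
  have hc'E' : c' ∉ E' := fun h => by simpa using hE'cc' h
  refine ⟨powersetCardNotSubset t (Iio c), powersetCardNotSubset t E',
    fun S hS => (mem_powersetCardNotSubset.1 hS).1, fun S hS => (mem_powersetCardNotSubset.1 hS).1,
    ?_, ?_, ?_⟩
  · rw [card_powersetCardNotSubset, Fintype.card_fin, Fin.card_Iio]
  · rw [card_powersetCardNotSubset, Fintype.card_fin, hE']
  · rw [image_delWord_piSingle ht (by omega) (by simp)
      (mem_Icc_iff_exists_position_of_Iio_subset (by omega) subset_rfl hcc'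
        fun h => (mem_Iio.1 h).asymm hcc'),
      image_delWord_piSingle ht (by omega) hc'E'
      (mem_Icc_iff_exists_position_of_Ioi_subset (by omega) hIoiE' hcc' hcE'), hc, hc']
    congr 3
    omega
end

section
/- Let n ≥ 4 be an integer, and consider the binary words x = 0^{⌈n/2⌉−1} 1 0^{⌊n/2⌋} and x' = 0^{⌈n/2⌉} 1 0^{⌊n/2⌋−1} of length n. Then there exist sets D and D' of deletion vectors for length-n words, each vector of weight exactly 1, with |D| = |D'| = ⌊n/2⌋ + 1, such that the output multiset of D on x equals the output multiset of D' on x'. Consequently, in the multiset error-pattern model with at most one deletion per channel, ⌊n/2⌋ + 1 channels do not suffice to uniquely determine the transmitted word (the list size satisfies L_m ≥ 2). -/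
lemma Finset.sort_univ_sdiff_singleton {n : ℕ} (j : Fin n) :
    (Finset.univ \ {j}).sort (· ≤ ·) = (List.finRange n).erase j := by
  refine List.Perm.eq_of_pairwise' (Finset.pairwise_sort _ _)
    ((List.pairwise_le_finRange n).sublist List.erase_sublist) ?_
  rw [← Multiset.coe_eq_coe, Finset.sort_eq, ← Multiset.coe_erase, ← Fin.sort_univ,
    Finset.sort_eq, Finset.sdiff_singleton_eq_erase, Finset.erase_val]

lemma Multiset.map_insert_val_eq_cons_replicate {α β : Type*} [DecidableEq α] {s : Finset α}
    {a : α} (ha : a ∉ s) {f : α → β} {w : β} (hw : ∀ j ∈ s, f j = w) :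
    (insert a s).val.map f = f a ::ₘ replicate s.card w := by
  rw [Finset.insert_val_of_notMem ha, map_cons, map_congr rfl hw, map_const', Finset.card_val]

section SingleSymbol

variable {α : Type*} (c d : α) {n p j : ℕ}

lemma List.eraseIdx_ofFn_ite_self (hp : p < n) :
    (ofFn fun i : Fin n => if (i : ℕ) = p then c else d).eraseIdx p = replicate (n - 1) d := by
  apply ext_getElem (by simp [length_eraseIdx, hp])
  intro i _ _
  simp only [getElem_eraseIdx, List.getElem_ofFn, getElem_replicate]
  grind

lemma List.eraseIdx_ofFn_ite_of_lt (h : p < j) (hj : j < n) :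
    (ofFn fun i : Fin n => if (i : ℕ) = p then c else d).eraseIdx j =
      ofFn fun i : Fin (n - 1) => if (i : ℕ) = p then c else d := by
  apply ext_getElem (by simp [length_eraseIdx, hj])
  intro i _ _
  simp only [getElem_eraseIdx, List.getElem_ofFn]
  grind

lemma List.eraseIdx_ofFn_ite_of_gt (h : j < p) (hp : p < n) :
    (ofFn fun i : Fin n => if (i : ℕ) = p then c else d).eraseIdx j =
      ofFn fun i : Fin (n - 1) => if (i : ℕ) = p - 1 then c else d := by
  apply ext_getElem (by simp [length_eraseIdx]; omega)
  intro i _ _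
  simp only [getElem_eraseIdx, List.getElem_ofFn]
  grind

end SingleSymbol

section DeletionOutputs

variable {q n : ℕ}

lemma delWord_singleton (x : Fin n → Fin q) (j : Fin n) :
    delWord x {j} = (List.ofFn x).eraseIdx j := by
  rw [delWord, Finset.sort_univ_sdiff_singleton,
    List.erase_eq_eraseIdx_of_idxOf (List.idxOf_finRange j), ← List.eraseIdx_map,
    List.ofFn_eq_map]

lemma map_delWord_powersetCard_one (x : Fin n → Fin q) (s : Finset (Fin n)) :
    (s.powersetCard 1).val.map (delWord x) =
      s.val.map fun j : Fin n => (List.ofFn x).eraseIdx j := by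
  rw [Finset.powersetCard_one, Finset.map_val, Multiset.map_map]
  exact Multiset.map_congr rfl fun j _ => delWord_singleton x j

variable (c d : Fin q) {p : ℕ}

lemma map_delWord_ite_powersetCard_one_Ici (hp : p < n) :
    ((Finset.Ici (⟨p, hp⟩ : Fin n)).powersetCard 1).val.map
        (delWord fun i : Fin n => if (i : ℕ) = p then c else d) =
      List.replicate (n - 1) d ::ₘ Multiset.replicate (n - 1 - p)
        (List.ofFn fun i : Fin (n - 1) => if (i : ℕ) = p then c else d) := by
  rw [map_delWord_powersetCard_one, ← Finset.Ioi_insert,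
    Multiset.map_insert_val_eq_cons_replicate (by simp), List.eraseIdx_ofFn_ite_self c d hp,
    Fin.card_Ioi]
  · intro j hj
    exact List.eraseIdx_ofFn_ite_of_lt c d (Fin.lt_def.1 (Finset.mem_Ioi.1 hj)) j.isLt

lemma map_delWord_ite_powersetCard_one_insert_Iio (hp : p < n) (b : Fin n) (hb : b ≤ p) :
    ((insert (⟨p, hp⟩ : Fin n) (Finset.Iio b)).powersetCard 1).val.map
        (delWord fun i : Fin n => if (i : ℕ) = p then c else d) =
      List.replicate (n - 1) d ::ₘ Multiset.replicate b
        (List.ofFn fun i : Fin (n - 1) => if (i : ℕ) = p - 1 then c else d) := by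
  rw [map_delWord_powersetCard_one,
    Multiset.map_insert_val_eq_cons_replicate (by simpa [Fin.le_def] using hb),
    List.eraseIdx_ofFn_ite_self c d hp, Fin.card_Iio]
  · intro j hj
    exact List.eraseIdx_ofFn_ite_of_gt c d ((Fin.lt_def.1 (Finset.mem_Iio.1 hj)).trans_le hb) hp

end DeletionOutputs

/-- In the multiset error-pattern model with single deletions (`t = 1`), the words
`x = 0^{⌈n/2⌉-1} 1 0^{⌊n/2⌋}` (single `1` at 0-indexed position `(n+1)/2 - 1`) and
`x' = 0^{⌈n/2⌉} 1 0^{⌊n/2⌋-1}` (single `1` at position `(n+1)/2`) admit sets of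
`⌊n/2⌋ + 1` distinct deletion vectors of weight exactly 1 with identical output multisets,
so `⌊n/2⌋ + 1` channels do not determine the transmitted word. -/
theorem multiset_model_single_deletion_not_enough_channels
    (n : ℕ) (hn : 4 ≤ n) :
    ∃ D D' : Finset (Finset (Fin n)),
      (∀ S ∈ D, S.card = 1) ∧ (∀ S ∈ D', S.card = 1) ∧
      D.card = n / 2 + 1 ∧ D'.card = n / 2 + 1 ∧
      Multiset.map (delWord (fun i : Fin n => if (i : ℕ) = (n + 1) / 2 - 1 then (1 : Fin 2) else 0))
          D.val =
        Multiset.map (delWord (fun i : Fin n => if (i : ℕ) = (n + 1) / 2 then (1 : Fin 2) else 0))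
          D'.val := by
  have ha : (n + 1) / 2 - 1 < n := by omega
  have ha' : (n + 1) / 2 < n := by omega
  have hb : n / 2 < n := by omega
  have hba : n / 2 ≤ (n + 1) / 2 := by omega
  refine ⟨(Finset.Ici ⟨_, ha⟩).powersetCard 1,
    (insert ⟨_, ha'⟩ (Finset.Iio ⟨_, hb⟩)).powersetCard 1,
    fun S hS => (Finset.mem_powersetCard.1 hS).2, fun S hS => (Finset.mem_powersetCard.1 hS).2,
    ?_, ?_, ?_⟩
  · simp only [Finset.card_powersetCard, Nat.choose_one_right, Fin.card_Ici]
    omega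
  · rw [Finset.card_powersetCard, Nat.choose_one_right,
      Finset.card_insert_of_notMem (by simpa using hba), Fin.card_Iio]
  · rw [map_delWord_ite_powersetCard_one_Ici,
      map_delWord_ite_powersetCard_one_insert_Iio _ _ _ _ hba]
    congr 2
    dsimp only
    omega
end

section
/- Let t ≥ 1, n ≥ t+1 and 1 ≤ a ≤ n−1 be integers, and consider the binary words x = 0^{a−1} 1 0^{n−a} and x' = 0^{a} 1 0^{n−a−1} of length n. Let K = ⌊(a·t + a)/n⌋ and M = C(n,t) − C(a−1, K)·C(n−a−1, t−K). Then: (1) there exist sets D and D' of deletion vectors for length-n words, each vector of weight exactly t, with |D| = |D'| = M, such that the output multiset of D on x equals the output multiset of D' on x'; and (2) for any sets D and D' of deletion vectors of weight exactly t with |D| = |D'| whose output multiset on x equals the output multiset on x', one has |D| ≤ M. In other words, M + 1 channels with distinct deletion vectors of weight exactly t suffice to distinguish x from x' in the multiset model, while M channels do not. -/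
open Finset

open Multiset in
theorem Multiset.exists_le_map_eq_of_le_map {α β : Type*} [DecidableEq β] {f : α → β}
    {s : Multiset β} {m : Multiset α} (h : s ≤ m.map f) : ∃ u ≤ m, u.map f = s := by
  induction m using Multiset.induction_on generalizing s with
  | empty => exact ⟨0, le_rfl, by simpa [eq_comm] using h⟩
  | cons a m ih =>
    rw [map_cons] at h
    by_cases ha : f a ∈ s
    · obtain ⟨u, hu, hus⟩ := ih (erase_le_iff_le_cons.2 h)
      exact ⟨a ::ₘ u, cons_le_cons a hu, by rw [map_cons, hus, cons_erase ha]⟩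
    · obtain ⟨u, hu, rfl⟩ := ih ((le_cons_of_notMem ha).1 h)
      exact ⟨u, hu.trans (le_cons_self m a), rfl⟩

theorem Finset.exists_subset_map_val_eq_of_le {α β : Type*} [DecidableEq β] {f : α → β}
    {s : Multiset β} {U : Finset α} (h : s ≤ U.val.map f) : ∃ D ⊆ U, D.val.map f = s := by
  obtain ⟨u, hu, rfl⟩ := Multiset.exists_le_map_eq_of_le_map h
  exact ⟨⟨u, Multiset.nodup_of_le hu U.nodup⟩, val_le_iff.1 hu, rfl⟩

theorem Finset.exists_subsets_card_eq_card_inter_map {α β γ : Type*} [DecidableEq γ]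
    (f : α → γ) (g : β → γ) (U : Finset α) (V : Finset β) :
    ∃ D ⊆ U, ∃ D' ⊆ V, #D = Multiset.card (U.val.map f ∩ V.val.map g) ∧
      #D' = Multiset.card (U.val.map f ∩ V.val.map g) ∧ D.val.map f = D'.val.map g := by
  obtain ⟨D, hD, hDf⟩ :=
    exists_subset_map_val_eq_of_le (Multiset.inter_le_left (s := U.val.map f) (t := V.val.map g))
  obtain ⟨D', hD', hD'g⟩ :=
    exists_subset_map_val_eq_of_le (Multiset.inter_le_right (s := U.val.map f) (t := V.val.map g))
  refine ⟨D, hD, D', hD', ?_, ?_, hDf.trans hD'g.symm⟩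
  · rw [← hDf, Multiset.card_map, card_def]
  · rw [← hD'g, Multiset.card_map, card_def]

theorem Finset.card_le_card_inter_map_of_map_eq {α β γ : Type*} [DecidableEq γ]
    {f : α → γ} {g : β → γ} {D U : Finset α} {D' V : Finset β} (hD : D ⊆ U) (hD' : D' ⊆ V)
    (h : D.val.map f = D'.val.map g) : #D ≤ Multiset.card (U.val.map f ∩ V.val.map g) := by
  rw [card_def, ← Multiset.card_map f]
  refine Multiset.card_le_card (Multiset.le_inter (Multiset.map_le_map (val_le_iff.2 hD)) ?_)
  rw [h]
  exact Multiset.map_le_map (val_le_iff.2 hD')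

open Multiset in
theorem Multiset.map_inter_of_injective {α β : Type*} [DecidableEq α] [DecidableEq β]
    {f : α → β} (hf : Function.Injective f) (s t : Multiset α) :
    (s ∩ t).map f = s.map f ∩ t.map f := by
  ext b
  by_cases hb : b ∈ Set.range f
  · obtain ⟨a, rfl⟩ := hb
    simp only [count_inter, count_map_eq_count' f _ hf]
  · have hs : ∀ u : Multiset α, count b (u.map f) = 0 := fun u =>
      count_eq_zero.2 fun hmem => hb (by obtain ⟨a, -, rfl⟩ := mem_map.1 hmem; exact ⟨a, rfl⟩)
    simp only [count_inter, hs, min_self]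

theorem Finset.count_map_val_eq_card_filter {α β : Type*} [DecidableEq β] (f : α → β)
    (U : Finset α) (b : β) :
    Multiset.count b (U.val.map f) = #{a ∈ U | f a = b} := by
  rw [Multiset.count_map, card_def, filter_val]
  simp only [eq_comm]

theorem Finset.sort_eq_append_cons {α : Type*} [LinearOrder α] {s : Finset α} {p : α}
    (hp : p ∈ s) :
    s.sort (· ≤ ·) = (s.filter (· < p)).sort (· ≤ ·) ++ p :: (s.filter (p < ·)).sort (· ≤ ·) := by
  refine (sortedLT_sort s).eq_of_mem_iff ?_ fun a => ?_
  · simp only [List.sortedLT_iff_pairwise, List.pairwise_append, List.pairwise_cons, List.mem_cons,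
      mem_sort, mem_filter]
    refine ⟨(sortedLT_sort _).pairwise, ⟨fun a ha => ha.2, (sortedLT_sort _).pairwise⟩, ?_⟩
    rintro a ⟨-, hap⟩ b (rfl | ⟨-, hpb⟩)
    exacts [hap, hap.trans hpb]
  · simp only [mem_sort, List.mem_append, List.mem_cons, mem_filter]
    grind

def oneHotWord (m : ℕ) : Option ℕ → List (Fin 2)
  | none => List.replicate m 0
  | some k => List.replicate k 0 ++ 1 :: List.replicate (m - 1 - k) 0

theorem oneHotWord_injective (m : ℕ) : Function.Injective (oneHotWord m) := by
  rintro (_ | k) (_ | k') h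
  · rfl
  · simpa [oneHotWord] using congrArg ((1 : Fin 2) ∈ ·) h
  · simpa [oneHotWord] using congrArg ((1 : Fin 2) ∈ ·) h
  · simpa [oneHotWord, List.idxOf_append_of_notMem] using congrArg (List.idxOf 1) h

def keptRank {n : ℕ} (p : Fin n) (S : Finset (Fin n)) : Option ℕ :=
  if p ∈ S then none else some #(Iio p \ S)

theorem delWord_indicator {n : ℕ} (p : Fin n) (S : Finset (Fin n)) :
    delWord (fun i => if i = p then (1 : Fin 2) else 0) S = oneHotWord (n - #S) (keptRank p S) := by
  have hzero : ∀ l : List (Fin n), p ∉ l →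
      l.map (fun i => if i = p then (1 : Fin 2) else 0) = List.replicate l.length 0 :=
    fun l hl => List.map_eq_replicate_iff.2 fun i hi => by
      simp [show i ≠ p by rintro rfl; exact hl hi]
  have hlen : (delWord (fun i => if i = p then (1 : Fin 2) else 0) S).length = n - #S := by
    simp [delWord, card_univ_sdiff]
  unfold delWord at hlen ⊢
  unfold keptRank
  split_ifs with hp
  · rw [hzero _ (by simpa using hp)]
    simp [oneHotWord, card_univ_sdiff]
  · rw [sort_eq_append_cons (by simpa using hp)] at hlen ⊢
    have hbefore : (univ \ S).filter (· < p) = Iio p \ S := by ext; simp [and_comm]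
    rw [List.map_append, List.map_cons, if_pos rfl, hzero _ (by simp), hzero _ (by simp)]
      at hlen ⊢
    simp only [List.length_append, List.length_cons, List.length_replicate, length_sort,
      hbefore] at hlen ⊢
    simp only [oneHotWord]
    congr 3
    omega

-- The guard matters: for `j > t` the subtraction `t - j` truncates to `0`.
def splitChoose (a b t j : ℕ) : ℕ := if j ≤ t then a.choose j * b.choose (t - j) else 0

theorem card_powersetCard_filter_card_inter {α : Type*} [DecidableEq α] {s u : Finset α}
    (hs : s ⊆ u) (t j : ℕ) :
    #{S ∈ u.powersetCard t | #(S ∩ s) = j} = splitChoose #s #(u \ s) t j := by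
  unfold splitChoose
  split_ifs with hj
  · rw [← card_powersetCard, ← card_powersetCard, ← card_product]
    refine card_nbij' (fun S => (S ∩ s, S \ s)) (fun LR => LR.1 ∪ LR.2) ?_ ?_ ?_ ?_
    · intro S hS
      simp only [mem_coe, mem_filter, mem_powersetCard, mem_product] at hS ⊢
      refine ⟨⟨inter_subset_right, hS.2⟩, sdiff_subset_sdiff hS.1.1 le_rfl, ?_⟩
      rw [card_sdiff, inter_comm, hS.2, hS.1.2]
    · rintro ⟨L, R⟩ hLR
      simp only [mem_coe, mem_filter, mem_powersetCard, mem_product] at hLR ⊢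
      obtain ⟨⟨hLs, hLc⟩, hRu, hRc⟩ := hLR
      have hRs := (subset_sdiff.1 hRu).2
      refine ⟨⟨union_subset (hLs.trans hs) (hRu.trans sdiff_subset), ?_⟩, ?_⟩
      · rw [card_union_of_disjoint (disjoint_of_subset_left hLs hRs.symm)]; omega
      · rw [union_inter_distrib_right, inter_eq_left.2 hLs,
          disjoint_iff_inter_eq_empty.1 hRs, union_empty, hLc]
    · intro S _
      exact sup_inf_sdiff S s
    · rintro ⟨L, R⟩ hLR
      simp only [mem_coe, mem_powersetCard, mem_product] at hLR
      obtain ⟨⟨hLs, -⟩, hRu, -⟩ := hLR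
      have hRs := (subset_sdiff.1 hRu).2
      simp only [Prod.mk.injEq]
      constructor
      · rw [union_inter_distrib_right, inter_eq_left.2 hLs,
          disjoint_iff_inter_eq_empty.1 hRs, union_empty]
      · rw [union_sdiff_distrib, sdiff_eq_empty_iff_subset.2 hLs, empty_union,
          sdiff_eq_self_of_disjoint hRs]
  · refine card_eq_zero.2 (filter_eq_empty_iff.2 fun S hS hSj => hj ?_)
    rw [← hSj, ← (mem_powersetCard.1 (mem_def.2 hS)).2]
    exact card_le_card inter_subset_left

theorem card_keptRank_eq_none {n t : ℕ} (p : Fin n) (ht : 1 ≤ t) :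
    #{S ∈ (univ : Finset (Fin n)).powersetCard t | keptRank p S = none} =
      (n - 1).choose (t - 1) := by
  have hfib : {S ∈ (univ : Finset (Fin n)).powersetCard t | keptRank p S = none} =
      {S ∈ (univ : Finset (Fin n)).powersetCard t | {p} ⊆ S} := by
    ext S; simp [keptRank]
  rw [hfib, card_filter_powersetCard_subset _ _ _ (subset_univ _) (by simpa using ht)]
  simp

theorem card_keptRank_eq_some {n t j : ℕ} (p : Fin n) (hj : j ≤ p) :
    #{S ∈ (univ : Finset (Fin n)).powersetCard t | keptRank p S = some (p - j)} =
      splitChoose p (n - 1 - p) t j := by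
  have hfib : {S ∈ (univ : Finset (Fin n)).powersetCard t | keptRank p S = some (p - j)} =
      {S ∈ (univ.erase p).powersetCard t | #(S ∩ Iio p) = j} := by
    ext S
    have hkept : #(Iio p \ S) = p - #(S ∩ Iio p) := by rw [card_sdiff, Fin.card_Iio]
    have hle : #(S ∩ Iio p) ≤ p := (card_le_card inter_subset_right).trans (Fin.card_Iio p).le
    by_cases hp : p ∈ S <;> simp [keptRank, hp, hkept, subset_erase]
    omega
  have hafter : univ.erase p \ Iio p = Ioi p := by
    ext i
    simp only [mem_sdiff, mem_erase, mem_univ, mem_Iio, mem_Ioi, and_true, not_lt]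
    exact ⟨fun h => lt_of_le_of_ne h.2 h.1.symm, fun h => ⟨h.ne', h.le⟩⟩
  rw [hfib, card_powersetCard_filter_card_inter (fun i hi => by simp [(mem_Iio.1 hi).ne]),
    Fin.card_Iio, hafter, Fin.card_Ioi]

theorem sum_range_splitChoose (a b t : ℕ) :
    ∑ j ∈ range (a + 1), splitChoose a b t j = (a + b).choose t := by
  have hsub : ∀ m, m ≤ a + t + 1 → range m ⊆ range (a + t + 1) :=
    fun m hm => range_subset_range.2 hm
  calc ∑ j ∈ range (a + 1), splitChoose a b t j
      = ∑ j ∈ range (a + t + 1), splitChoose a b t j :=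
        sum_subset (hsub _ (by omega)) fun j _ hj => by
          simp [splitChoose, Nat.choose_eq_zero_of_lt (by simpa using hj)]
    _ = ∑ j ∈ range (t + 1), splitChoose a b t j :=
        (sum_subset (hsub _ (by omega)) fun j _ hj => if_neg (by simpa using hj)).symm
    _ = ∑ j ∈ range (t + 1), a.choose j * b.choose (t - j) :=
        sum_congr rfl fun j hj => if_pos (Nat.lt_succ_iff.1 (mem_range.1 hj))
    _ = (a + b).choose t := by rw [Nat.add_choose_eq, Nat.sum_antidiagonal_eq_sum_range_succ_mk]

theorem splitChoose_succ_right_succ (a b t j : ℕ) :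
    splitChoose a (b + 1) (t + 1) j = splitChoose a b t j + splitChoose a b (t + 1) j := by
  unfold splitChoose
  rcases lt_trichotomy j (t + 1) with hj | rfl | hj
  · rw [if_pos (by omega), if_pos (by omega), if_pos hj.le, Nat.sub_add_comm (by omega),
      Nat.choose_succ_succ', mul_add, add_comm]
  · simp
  · simp [show ¬ j ≤ t by omega, show ¬ j ≤ t + 1 by omega]

theorem splitChoose_succ_succ (a b t j : ℕ) :
    splitChoose (a + 1) b (t + 1) (j + 1) =
      splitChoose a b t j + splitChoose a b (t + 1) (j + 1) := by
  unfold splitChoose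
  by_cases hj : j ≤ t
  · rw [if_pos (by omega), if_pos hj, if_pos (by omega), Nat.choose_succ_succ', add_mul,
      Nat.add_sub_add_right]
  · rw [if_neg (by omega), if_neg hj, if_neg (by omega)]

theorem choose_mul_choose_le_choose_mul_choose {a b j v : ℕ}
    (h : (j + 1) * (b + 1) ≤ (a + 1) * (v + 1)) :
    a.choose j * b.choose (v + 1) ≤ a.choose (j + 1) * b.choose v := by
  rcases le_or_gt b v with hbv | hvb
  · simp [Nat.choose_eq_zero_of_lt (Nat.lt_succ_of_le hbv)]
  have hja : j < a := by by_contra! hja; nlinarith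
  have hcross : a.choose j * b.choose (v + 1) * ((a - j) * (v + 1)) =
      a.choose (j + 1) * b.choose v * ((j + 1) * (b - v)) := by
    have h₁ := Nat.choose_succ_right_eq a j
    have h₂ := Nat.choose_succ_right_eq b v
    calc a.choose j * b.choose (v + 1) * ((a - j) * (v + 1))
        = (a.choose j * (a - j)) * (b.choose (v + 1) * (v + 1)) := by ring
      _ = (a.choose (j + 1) * (j + 1)) * (b.choose v * (b - v)) := by rw [h₁, h₂]
      _ = _ := by ring
  -- `(a - j) * (v + 1) - (j + 1) * (b - v) = (a + 1) * (v + 1) - (j + 1) * (b + 1)`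
  have hratio : (j + 1) * (b - v) ≤ (a - j) * (v + 1) := by
    zify [hja.le, hvb.le] at h ⊢
    nlinarith
  refine Nat.le_of_mul_le_mul_right ?_ (Nat.mul_pos (Nat.sub_pos_of_lt hja) v.succ_pos)
  rw [hcross]
  exact Nat.mul_le_mul_left _ hratio

theorem splitChoose_le_splitChoose_succ {a b t j : ℕ}
    (h : (j + 1) * (a + b + 2) ≤ (a + 1) * (t + 1)) :
    splitChoose a b t j ≤ splitChoose a b t (j + 1) := by
  have hjt : j + 1 ≤ t := by by_contra! hjt; nlinarith
  obtain ⟨v, rfl⟩ : ∃ v, t = j + 1 + v := ⟨t - (j + 1), by omega⟩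
  have hv : (j + 1) * (b + 1) ≤ (a + 1) * (v + 1) := by nlinarith
  simp only [splitChoose, if_pos hjt, if_pos (show j ≤ j + 1 + v by omega),
    show j + 1 + v - j = v + 1 by omega, show j + 1 + v - (j + 1) = v by omega]
  exact choose_mul_choose_le_choose_mul_choose hv

theorem splitChoose_succ_le_splitChoose {a b t j : ℕ}
    (h : (a + 1) * (t + 1) < (j + 1) * (a + b + 2)) :
    splitChoose a b t (j + 1) ≤ splitChoose a b t j := by
  by_cases hjt : j + 1 ≤ t
  · obtain ⟨v, rfl⟩ : ∃ v, t = j + 1 + v := ⟨t - (j + 1), by omega⟩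
    -- the previous inequality with the roles of `(a, j)` and `(b, v)` exchanged
    have hv : (v + 1) * (a + 1) ≤ (b + 1) * (j + 1) := by nlinarith
    have := choose_mul_choose_le_choose_mul_choose hv
    simp only [splitChoose, if_pos hjt, if_pos (show j ≤ j + 1 + v by omega),
      show j + 1 + v - j = v + 1 by omega, show j + 1 + v - (j + 1) = v by omega]
    linarith [mul_comm (a.choose (j + 1)) (b.choose v), mul_comm (a.choose j) (b.choose (v + 1))]
  · simp [splitChoose, hjt]

theorem sum_range_min_add_of_unimodal (g : ℕ → ℕ) {K N : ℕ} (hKN : K ≤ N)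
    (hup : ∀ j < K, g j ≤ g (j + 1)) (hdown : ∀ j, K ≤ j → g (j + 1) ≤ g j) (hN : g N = 0) :
    ∑ j ∈ range N, min (g j) (g (j + 1)) + g K = ∑ j ∈ range N, g j := by
  obtain ⟨m, rfl⟩ := Nat.exists_eq_add_of_le hKN
  have hleft : ∑ j ∈ range K, min (g j) (g (j + 1)) = ∑ j ∈ range K, g j :=
    sum_congr rfl fun j hj => min_eq_left (hup j (mem_range.1 hj))
  have hright :
      ∑ j ∈ range m, min (g (K + j)) (g (K + j + 1)) = ∑ j ∈ range m, g (K + (j + 1)) :=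
    sum_congr rfl fun j _ => min_eq_right (hdown _ (Nat.le_add_right K j))
  have hshift := (sum_range_succ (fun j => g (K + j)) m).symm.trans (sum_range_succ' _ m)
  rw [hN, add_zero, add_zero] at hshift
  rw [sum_range_add, sum_range_add, hleft, hright, add_assoc, ← hshift]

theorem choose_add_sum_min_splitChoose (A B t : ℕ) (ht : 1 ≤ t) (htn : t + 1 ≤ A + B + 2) :
    (A + B + 1).choose (t - 1) +
        ∑ j ∈ range (A + 1), min (splitChoose A (B + 1) t j) (splitChoose (A + 1) B t (j + 1)) =
      (A + B + 2).choose t - splitChoose A B t ((A + 1) * (t + 1) / (A + B + 2)) := by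
  obtain ⟨s, rfl⟩ := Nat.exists_eq_add_of_le' ht
  set K := (A + 1) * (s + 1 + 1) / (A + B + 2)
  have hpos : 0 < A + B + 2 := by omega
  have hmin : ∀ j,
      min (splitChoose A (B + 1) (s + 1) j) (splitChoose (A + 1) B (s + 1) (j + 1)) =
        splitChoose A B s j +
          min (splitChoose A B (s + 1) j) (splitChoose A B (s + 1) (j + 1)) := fun j => by
    rw [splitChoose_succ_right_succ, splitChoose_succ_succ, min_add_add_left]
  have hmode := sum_range_min_add_of_unimodal (splitChoose A B (s + 1)) (K := K) (N := A + 1)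
    (Nat.div_le_of_le_mul (by nlinarith))
    (fun j hj => splitChoose_le_splitChoose_succ ((Nat.le_div_iff_mul_le hpos).1 hj))
    (fun j hj =>
      splitChoose_succ_le_splitChoose ((Nat.div_lt_iff_lt_mul hpos).1 (Nat.lt_succ_of_le hj)))
    (by simp [splitChoose])
  rw [sum_range_splitChoose] at hmode
  rw [sum_congr rfl fun j _ => hmin j, sum_add_distrib, sum_range_splitChoose,
    Nat.add_sub_cancel, Nat.choose_succ_succ' (A + B + 1), Nat.choose_succ_succ' (A + B)]
  omega

theorem card_map_keptRank_inter (A B t : ℕ) (ht : 1 ≤ t) :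
    Multiset.card
        ((powersetCard t univ).val.map (keptRank (⟨A, by omega⟩ : Fin (A + B + 2))) ∩
          (powersetCard t univ).val.map (keptRank (⟨A + 1, by omega⟩ : Fin (A + B + 2)))) =
      (A + B + 1).choose (t - 1) +
        ∑ j ∈ range (A + 1), min (splitChoose A (B + 1) t j) (splitChoose (A + 1) B t (j + 1)) := by
  set p : Fin (A + B + 2) := ⟨A, by omega⟩
  set q : Fin (A + B + 2) := ⟨A + 1, by omega⟩
  -- rank `A - j` of the `1` means `j` deletions before `p`, and `j + 1` before `q`
  set C : Finset (Option ℕ) := insert none ((range (A + 1)).image fun j => some (A - j))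
  have hC : ∀ o ∈ (powersetCard t univ).val.map (keptRank p) ∩
      (powersetCard t univ).val.map (keptRank q), o ∈ C := by
    intro o ho
    obtain ⟨S, -, rfl⟩ := Multiset.mem_map.1 (Multiset.mem_of_le Multiset.inter_le_left ho)
    unfold keptRank
    split_ifs
    · exact mem_insert_self _ _
    · have hk : #(Iio p \ S) ≤ A := (card_le_card sdiff_subset).trans (Fin.card_Iio p).le
      exact mem_insert_of_mem (mem_image.2 ⟨A - #(Iio p \ S), by simp, by simp; omega⟩)
  have hinj : Set.InjOn (fun j => some (A - j)) (range (A + 1) : Set ℕ) := by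
    intro j hj j' hj' h
    simp only [coe_range, Set.mem_Iio, Option.some.injEq] at hj hj' h
    omega
  rw [← Multiset.sum_count_eq_card hC, sum_insert (by simp), sum_image hinj]
  simp only [Multiset.count_inter, count_map_val_eq_card_filter]
  rw [card_keptRank_eq_none p ht, card_keptRank_eq_none q ht, min_self]
  congr 1
  refine sum_congr rfl fun j hj => ?_
  have hjA : j ≤ A := Nat.lt_succ_iff.1 (mem_range.1 hj)
  have hq : A - j = (q : ℕ) - (j + 1) := by simp [q]
  rw [show A - j = (p : ℕ) - j from rfl, card_keptRank_eq_some p hjA, hq,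
    card_keptRank_eq_some q (by simp [q]; omega)]
  simp [p, q, show A + B + 1 - A = B + 1 by omega]

theorem card_map_delWord_indicator_inter (A B t : ℕ) (ht : 1 ≤ t) (htn : t + 1 ≤ A + B + 2) :
    Multiset.card ((powersetCard t univ).val.map
          (delWord fun i : Fin (A + B + 2) => if i = ⟨A, by omega⟩ then (1 : Fin 2) else 0) ∩
        (powersetCard t univ).val.map
          (delWord fun i : Fin (A + B + 2) => if i = ⟨A + 1, by omega⟩ then (1 : Fin 2) else 0)) =
      (A + B + 2).choose t - splitChoose A B t ((A + 1) * (t + 1) / (A + B + 2)) := by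
  have hmap : ∀ p : Fin (A + B + 2), (powersetCard t univ).val.map
      (delWord fun i => if i = p then (1 : Fin 2) else 0) =
      ((powersetCard t univ).val.map (keptRank p)).map (oneHotWord (A + B + 2 - t)) := by
    intro p
    rw [Multiset.map_map]
    refine Multiset.map_congr rfl fun S hS => ?_
    rw [Function.comp_apply, delWord_indicator, (mem_powersetCard.1 (mem_def.2 hS)).2]
  rw [hmap, hmap, ← Multiset.map_inter_of_injective (oneHotWord_injective _), Multiset.card_map,
    card_map_keptRank_inter A B t ht, choose_add_sum_min_splitChoose A B t ht htn]

/-- For `x = 0^{a-1} 1 0^{n-a}` (single `1` at 0-indexed position `a - 1`) and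
`x' = 0^{a} 1 0^{n-a-1}` (single `1` at position `a`), with `K = ⌊(at+a)/n⌋` and
`M = C(n,t) - C(a-1,K)·C(n-a-1,t-K)`: exactly `M` channels with distinct deletion
vectors of weight exactly `t` can produce equal output multisets from `x` and `x'`
(so `M + 1` channels distinguish them in the multiset model, while `M` do not). -/
theorem multiset_model_exact_channel_number
    (t n a : ℕ) (ht : 1 ≤ t) (hn : t + 1 ≤ n) (ha1 : 1 ≤ a) (ha2 : a ≤ n - 1) :
    let x : Fin n → Fin 2 := fun i => if (i : ℕ) = a - 1 then 1 else 0
    let x' : Fin n → Fin 2 := fun i => if (i : ℕ) = a then 1 else 0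
    let K := (a * t + a) / n
    let M := n.choose t - (a - 1).choose K * (n - a - 1).choose (t - K)
    (∃ D D' : Finset (Finset (Fin n)),
      (∀ S ∈ D, S.card = t) ∧ (∀ S ∈ D', S.card = t) ∧
      D.card = M ∧ D'.card = M ∧
      Multiset.map (delWord x) D.val = Multiset.map (delWord x') D'.val) ∧
    (∀ D D' : Finset (Finset (Fin n)),
      (∀ S ∈ D, S.card = t) → (∀ S ∈ D', S.card = t) →
      D.card = D'.card →
      Multiset.map (delWord x) D.val = Multiset.map (delWord x') D'.val →
      D.card ≤ M) := by
  intro x x' K M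
  obtain ⟨A, rfl⟩ : ∃ A, a = A + 1 := ⟨a - 1, by omega⟩
  obtain ⟨B, rfl⟩ : ∃ B, n = A + B + 2 := ⟨n - (A + 2), by omega⟩
  have hx : x = fun i => if i = ⟨A, by omega⟩ then 1 else 0 := by funext i; simp [x, Fin.ext_iff]
  have hx' : x' = fun i => if i = ⟨A + 1, by omega⟩ then 1 else 0 := by
    funext i; simp [x', Fin.ext_iff]
  have hKt : (A + 1) * (t + 1) / (A + B + 2) ≤ t :=
    Nat.lt_succ_iff.1 ((Nat.div_lt_iff_lt_mul (by omega)).2 (by nlinarith))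
  have hM : M = Multiset.card ((powersetCard t univ).val.map (delWord x) ∩
      (powersetCard t univ).val.map (delWord x')) := by
    rw [hx, hx', card_map_delWord_indicator_inter A B t ht hn]
    simp only [M, K, splitChoose, show (A + 1) * t + (A + 1) = (A + 1) * (t + 1) by ring,
      if_pos hKt, Nat.add_sub_cancel, show A + B + 2 - (A + 1) - 1 = B by omega]
  have hsub : ∀ D : Finset (Finset (Fin (A + B + 2))), (∀ S ∈ D, #S = t) →
      D ⊆ powersetCard t univ :=
    fun D hD S hS => mem_powersetCard.2 ⟨subset_univ S, hD S hS⟩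
  rw [hM]
  constructor
  · obtain ⟨D, hD, D', hD', hcard, hcard', hmap⟩ :=
      exists_subsets_card_eq_card_inter_map (delWord x) (delWord x') (powersetCard t univ)
        (powersetCard t univ)
    exact ⟨D, D', fun S hS => (mem_powersetCard.1 (hD hS)).2,
      fun S hS => (mem_powersetCard.1 (hD' hS)).2, hcard, hcard', hmap⟩
  · intro D D' hD hD' _ hmap
    exact card_le_card_inter_map_of_map_eq (hsub D hD) (hsub D' hD') hmap
end

section
/- Let t ≥ 1 be an integer and n ≥ 2t+2 be an even integer. Consider the binary words x1 = 0^{n/2−1} 1 0^{n/2} and x2 = 0^{n/2} 1 0^{n/2−1}, and let M = C(n,t) − C(n/2−1, ⌊t/2⌋)·C(n/2−1, ⌈t/2⌉). Then: (1) there exist sets D1 and D2 of deletion vectors for length-n words, each vector of weight exactly t, with |D1| = |D2| = M, such that the output multiset of D1 on x1 equals the output multiset of D2 on x2; and (2) for any such pair of sets of weight-exactly-t deletion vectors with equal output multisets on x1 and x2, |D1| ≤ M. In other words, exactly M + 1 channels are enough to distinguish x1 from x2 in the multiset model with exactly t deletions per channel. -/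
/-!
Deleting a weight-`t` set `S` from the word with a single `1` at position `a` gives the word of
length `n - t` whose single `1` sits at `a - k`, `k` being the number of deleted positions before
`a`, or the all-zero word if `a ∈ S`. Two families have equal output multisets iff they produce every
word equally often, so the largest such families have `∑_w min (N₁ w) (N₂ w)` members, `Nᵢ w`
counting the deletion sets that produce `w` from `xᵢ`. For `x₁` and `x₂` (with `p = n / 2`) the
shared outputs are the zero word, produced by `C(n-1,t-1)` sets from either word, and the words with
the `1` at `p - 1 - k` for `k < t`, produced by `C(p-1,k) C(p,t-k)` resp. `C(p,k+1) C(p-1,t-k-1)`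
sets. These counts are in ratio `(k+1) : (t-k)`, so the minimum switches sides at `k = ⌈t/2⌉`, and
Pascal's rule telescopes the sum of minima to Vandermonde's `C(2p-1,t)` minus the middle term
`C(p-1,⌊t/2⌋) C(p-1,⌈t/2⌉)`; adding the `C(n-1,t-1)` of the zero word gives `M`.
-/

open Finset

section Matching

variable {α β : Type*} [DecidableEq β]

theorem Finset.count_map_val (D : Finset α) (f : α → β) (b : β) :
    (D.val.map f).count b = #{x ∈ D | f x = b} := by
  rw [Multiset.count_map, card_def, filter_val]
  exact congrArg Multiset.card (Multiset.filter_congr fun _ _ => eq_comm)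

theorem card_le_sum_min_card_fiber_of_map_eq {U D₁ D₂ : Finset α} {f g : α → β} {B : Finset β}
    (hB : ∀ x ∈ U, ∀ y ∈ U, f x = g y → f x ∈ B) (h₁ : D₁ ⊆ U) (h₂ : D₂ ⊆ U)
    (h : D₁.val.map f = D₂.val.map g) :
    #D₁ ≤ ∑ b ∈ B, min #{x ∈ U | f x = b} #{x ∈ U | g x = b} := by
  have hmaps : ∀ x ∈ D₁, f x ∈ B := fun x hx => by
    obtain ⟨y, hy, hyx⟩ := Multiset.mem_map.1 (h ▸ Multiset.mem_map_of_mem f hx)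
    exact hB x (h₁ hx) y (h₂ hy) hyx.symm
  rw [card_eq_sum_card_fiberwise hmaps]
  refine sum_le_sum fun b _ => le_min (card_le_card (filter_subset_filter _ h₁)) ?_
  rw [← D₁.count_map_val, h, D₂.count_map_val]
  exact card_le_card (filter_subset_filter _ h₂)

variable [DecidableEq α]

theorem count_map_biUnion_of_subset_fiber {f : α → β} {T : β → Finset α}
    (hT : ∀ b, ∀ x ∈ T b, f x = b) (B : Finset β) (b : β) :
    ((B.biUnion T).val.map f).count b = if b ∈ B then #(T b) else 0 := by
  rw [count_map_val]
  split_ifs with hb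
  · congr 1
    ext x
    simp only [mem_filter, mem_biUnion]
    refine ⟨fun ⟨⟨c, _, hx⟩, hfx⟩ => hfx ▸ hT c x hx ▸ hx, fun hx => ⟨⟨b, hb, hx⟩, hT b x hx⟩⟩
  · rw [card_eq_zero, filter_eq_empty_iff]
    simp only [mem_biUnion]
    rintro x ⟨c, hc, hx⟩ rfl
    exact hb (hT c x hx ▸ hc)

theorem exists_map_eq_card_eq_sum_min_card_fiber (U : Finset α) (f g : α → β) (B : Finset β) :
    ∃ D₁ ⊆ U, ∃ D₂ ⊆ U, D₁.val.map f = D₂.val.map g ∧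
      #D₁ = ∑ b ∈ B, min #{x ∈ U | f x = b} #{x ∈ U | g x = b} ∧
      #D₂ = ∑ b ∈ B, min #{x ∈ U | f x = b} #{x ∈ U | g x = b} := by
  choose T₁ hT₁ hcard₁ using fun b =>
    exists_subset_card_eq (min_le_left #{x ∈ U | f x = b} #{x ∈ U | g x = b})
  choose T₂ hT₂ hcard₂ using fun b =>
    exists_subset_card_eq (min_le_right #{x ∈ U | f x = b} #{x ∈ U | g x = b})
  have hfib₁ : ∀ b, ∀ x ∈ T₁ b, f x = b := fun b x hx => (mem_filter.1 (hT₁ b hx)).2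
  have hfib₂ : ∀ b, ∀ x ∈ T₂ b, g x = b := fun b x hx => (mem_filter.1 (hT₂ b hx)).2
  refine ⟨B.biUnion T₁, biUnion_subset.2 fun b _ => (hT₁ b).trans (filter_subset _ _),
    B.biUnion T₂, biUnion_subset.2 fun b _ => (hT₂ b).trans (filter_subset _ _), ?_, ?_, ?_⟩
  · ext b
    rw [count_map_biUnion_of_subset_fiber hfib₁, count_map_biUnion_of_subset_fiber hfib₂,
      hcard₁, hcard₂]
  · rw [card_biUnion fun b _ c _ hbc => disjoint_left.2 fun x hb hc =>
      hbc ((hfib₁ b x hb).symm.trans (hfib₁ c x hc))]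
    exact sum_congr rfl fun b _ => hcard₁ b
  · rw [card_biUnion fun b _ c _ hbc => disjoint_left.2 fun x hb hc =>
      hbc ((hfib₂ b x hb).symm.trans (hfib₂ c x hc))]
    exact sum_congr rfl fun b _ => hcard₂ b

end Matching

theorem Finset.card_filter_powersetCard_card_filter {α : Type*} [DecidableEq α] (s : Finset α)
    (p : α → Prop) [DecidablePred p] (k l : ℕ) :
    #{T ∈ powersetCard (k + l) s | #{x ∈ T | p x} = k}
      = (#{x ∈ s | p x}).choose k * (#{x ∈ s | ¬p x}).choose l := by
  rw [← card_powersetCard, ← card_powersetCard, ← card_product]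
  have hsplit : ∀ {A B : Finset α}, A ⊆ s.filter p → B ⊆ s.filter (¬p ·) →
      (A ∪ B).filter p = A ∧ (A ∪ B).filter (¬p ·) = B := fun hA hB => by
    refine ⟨?_, ?_⟩ <;> ext x <;> simp only [mem_filter, mem_union] <;> grind
  refine card_nbij' (fun T => (T.filter p, T.filter (¬p ·))) (fun P => P.1 ∪ P.2) ?_ ?_ ?_ ?_
  · intro T hT
    simp only [coe_filter, mem_powersetCard, Set.mem_ofPred_eq, coe_product, Set.mem_prod,
      mem_coe] at hT ⊢
    have := card_filter_add_card_filter_not (s := T) (fun x => p x)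
    exact ⟨⟨filter_subset_filter p hT.1.1, hT.2⟩, filter_subset_filter _ hT.1.1, by omega⟩
  · rintro ⟨A, B⟩ hAB
    simp only [coe_filter, mem_powersetCard, Set.mem_ofPred_eq, coe_product, Set.mem_prod,
      mem_coe] at hAB ⊢
    obtain ⟨⟨hA, hAk⟩, hB, hBl⟩ := hAB
    have hdisj : Disjoint A B := (disjoint_filter_filter_not s s p).mono hA hB
    refine ⟨⟨union_subset (hA.trans (filter_subset _ _)) (hB.trans (filter_subset _ _)), ?_⟩, ?_⟩
    · rw [card_union_of_disjoint hdisj, hAk, hBl]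
    · rw [(hsplit hA hB).1, hAk]
  · intro T _
    exact filter_union_filter_not_eq p T
  · rintro ⟨A, B⟩ hAB
    simp only [coe_product, Set.mem_prod, mem_coe, mem_powersetCard] at hAB
    exact Prod.ext (hsplit hAB.1.1 hAB.2.1).1 (hsplit hAB.1.1 hAB.2.1).2

theorem Finset.card_filter_lt_orderEmbOfFin {α : Type*} [LinearOrder α] (s : Finset α) {k : ℕ}
    (h : #s = k) (j : Fin k) : #{x ∈ s | x < s.orderEmbOfFin h j} = j := by
  have : {x ∈ s | x < s.orderEmbOfFin h j} = (Iio j).map (s.orderEmbOfFin h).toEmbedding := by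
    ext x
    simp only [mem_filter, mem_map, mem_Iio, RelEmbedding.coe_toEmbedding]
    constructor
    · rintro ⟨hx, hlt⟩
      obtain ⟨i, rfl⟩ : x ∈ Set.range (s.orderEmbOfFin h) := by simpa using hx
      exact ⟨i, (s.orderEmbOfFin h).lt_iff_lt.1 hlt, rfl⟩
    · rintro ⟨i, hi, rfl⟩
      exact ⟨orderEmbOfFin_mem s h i, (s.orderEmbOfFin h).lt_iff_lt.2 hi⟩
  rw [this, card_map, Fin.card_Iio]

theorem Finset.orderEmbOfFin_eq_iff {α : Type*} [LinearOrder α] {s : Finset α} {k : ℕ}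
    (h : #s = k) {a : α} (ha : a ∈ s) (j : Fin k) :
    s.orderEmbOfFin h j = a ↔ (j : ℕ) = #{x ∈ s | x < a} := by
  obtain ⟨i, rfl⟩ : a ∈ Set.range (s.orderEmbOfFin h) := by simpa using ha
  rw [(s.orderEmbOfFin h).injective.eq_iff, card_filter_lt_orderEmbOfFin, Fin.val_inj]

namespace Nat

theorem add_one_mul_choose_mul_choose_eq_sub_mul (q t k : ℕ) (hk : k < t) :
    (k + 1) * ((q + 1).choose (k + 1) * q.choose (t - (k + 1)))
      = (t - k) * (q.choose k * (q + 1).choose (t - k)) := by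
  obtain ⟨r, rfl⟩ : ∃ r, t = k + 1 + r := ⟨t - (k + 1), by omega⟩
  rw [show k + 1 + r - (k + 1) = r by omega, show k + 1 + r - k = r + 1 by omega]
  apply Nat.eq_of_mul_eq_mul_left q.succ_pos
  have hk := add_one_mul_choose_eq q k
  have hr := add_one_mul_choose_eq q r
  calc (q + 1) * ((k + 1) * ((q + 1).choose (k + 1) * q.choose r))
      = (k + 1) * (q + 1).choose (k + 1) * ((q + 1) * q.choose r) := by ring
    _ = (r + 1) * ((q + 1) * q.choose k) * (q + 1).choose (r + 1) := by rw [hr, hk]; ring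
    _ = (q + 1) * ((r + 1) * (q.choose k * (q + 1).choose (r + 1))) := by ring

theorem choose_mul_choose_add_choose_mul_choose (q t k : ℕ) (hk : k < t) :
    q.choose k * (q + 1).choose (t - k) + q.choose (k + 1) * q.choose (t - (k + 1))
      = (q + 1).choose (k + 1) * q.choose (t - (k + 1)) + q.choose k * q.choose (t - k) := by
  obtain ⟨r, rfl⟩ : ∃ r, t = k + 1 + r := ⟨t - (k + 1), by omega⟩
  rw [show k + 1 + r - (k + 1) = r by omega, show k + 1 + r - k = r + 1 by omega,
    choose_succ_succ', choose_succ_succ']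
  ring

theorem min_choose_mul_choose_of_lt_half {q t k : ℕ} (hk : k < (t + 1) / 2) :
    min (q.choose k * (q + 1).choose (t - k)) ((q + 1).choose (k + 1) * q.choose (t - (k + 1)))
      = q.choose k * (q + 1).choose (t - k) := by
  refine min_eq_left (le_of_mul_le_mul_left ?_ k.succ_pos)
  rw [add_one_mul_choose_mul_choose_eq_sub_mul q t k (by omega)]
  exact Nat.mul_le_mul_right _ (by omega)

theorem min_choose_mul_choose_of_half_le {q t k : ℕ} (hk : (t + 1) / 2 ≤ k) (hkt : k < t) :
    min (q.choose k * (q + 1).choose (t - k)) ((q + 1).choose (k + 1) * q.choose (t - (k + 1)))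
      = (q + 1).choose (k + 1) * q.choose (t - (k + 1)) := by
  refine min_eq_right (le_of_mul_le_mul_left ?_ k.succ_pos)
  rw [add_one_mul_choose_mul_choose_eq_sub_mul q t k hkt]
  exact Nat.mul_le_mul_right _ (by omega)

theorem sum_Ico_choose_mul_choose_telescope (q t i : ℕ) {j : ℕ} (hij : i ≤ j) (hjt : j ≤ t) :
    ∑ k ∈ Ico i j, (q + 1).choose (k + 1) * q.choose (t - (k + 1)) + q.choose i * q.choose (t - i)
      = ∑ k ∈ Ico i j, q.choose k * (q + 1).choose (t - k) + q.choose j * q.choose (t - j) := by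
  induction j, hij using le_induction with
  | base => simp
  | succ j hij ih =>
    have := choose_mul_choose_add_choose_mul_choose q t j (by omega)
    rw [sum_Ico_succ_top hij, sum_Ico_succ_top hij]
    linarith [ih (by omega)]

theorem sum_range_min_choose_mul_choose (q t : ℕ) :
    ∑ k ∈ range t,
        min (q.choose k * (q + 1).choose (t - k)) ((q + 1).choose (k + 1) * q.choose (t - (k + 1)))
      + q.choose ((t + 1) / 2) * q.choose (t / 2) = (2 * q + 1).choose t := by
  have hhalf : (t + 1) / 2 ≤ t := by omega
  rw [← sum_range_add_sum_Ico _ hhalf,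
    sum_congr rfl fun k hk => min_choose_mul_choose_of_lt_half (mem_range.1 hk),
    sum_congr rfl fun k hk => min_choose_mul_choose_of_half_le (mem_Ico.1 hk).1 (mem_Ico.1 hk).2,
    show t / 2 = t - (t + 1) / 2 by omega, add_assoc,
    sum_Ico_choose_mul_choose_telescope q t _ hhalf le_rfl, ← add_assoc,
    sum_range_add_sum_Ico _ hhalf, show 2 * q + 1 = q + (q + 1) by ring, add_choose_eq,
    Finset.Nat.sum_antidiagonal_eq_sum_range_succ_mk, sum_range_succ]
  simp

end Nat

-- For `c ≥ m` this is the all-zero word; `c = m` is the index used for it.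
def unitWord (m c : ℕ) : List (Fin 2) :=
  List.ofFn fun j : Fin m => if (j : ℕ) = c then 1 else 0

theorem unitWord_injOn (m : ℕ) : Set.InjOn (unitWord m) (Set.Iic m) := by
  intro c hc c' hc' h
  have key : ∀ j < m, j = c ↔ j = c' := fun j hj => by
    have := congrFun (List.ofFn_injective h) ⟨j, hj⟩
    by_cases j = c <;> by_cases j = c' <;> simp_all
  simp only [Set.mem_Iic] at hc hc'
  rcases hc.lt_or_eq with hc | rfl
  · exact (key c hc).1 rfl
  rcases hc'.lt_or_eq with hc' | rfl
  · exact ((key c' hc').2 rfl).symm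
  · rfl

-- The words that the unit words at `a` and `a + 1` can both produce, for `m = n - t`.
def sharedOutputs (m a t : ℕ) : Finset (List (Fin 2)) :=
  insert (unitWord m m) ((range t).image fun k => unitWord m (a - k))

section SingleOne

variable {n : ℕ}

-- Where the `1` of `Pi.single a 1` ends up after deleting `S`; the output length `n - #S` if
-- `a ∈ S`, matching the index of the all-zero `unitWord`.
def posAfterDel (a : Fin n) (S : Finset (Fin n)) : ℕ :=
  if a ∈ S then n - #S else #{i ∈ univ \ S | i < a}

theorem posAfterDel_add_card_filter_lt {a : Fin n} {S : Finset (Fin n)} (ha : a ∉ S) :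
    posAfterDel a S + #{i ∈ S | i < a} = a := by
  rw [posAfterDel, if_neg ha, ← card_union_of_disjoint
    (disjoint_filter_filter sdiff_disjoint), ← filter_union, sdiff_union_of_subset (subset_univ S),
    filter_gt_eq_Iio, Fin.card_Iio]

theorem posAfterDel_lt {a : Fin n} {S : Finset (Fin n)} (ha : a ∉ S) :
    posAfterDel a S < n - #S := by
  calc posAfterDel a S < #(univ \ S) := by
        rw [posAfterDel, if_neg ha]
        exact card_lt_card (filter_ssubset.2 ⟨a, by simpa using ha, lt_irrefl a⟩)
    _ = n - #S := by rw [card_univ_sdiff, Fintype.card_fin]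

theorem posAfterDel_le (a : Fin n) (S : Finset (Fin n)) : posAfterDel a S ≤ n - #S := by
  by_cases ha : a ∈ S
  · rw [posAfterDel, if_pos ha]
  · exact (posAfterDel_lt ha).le

theorem delWord_single (a : Fin n) (S : Finset (Fin n)) :
    delWord (Pi.single a 1) S = unitWord (n - #S) (posAfterDel a S) := by
  have hcard : #(univ \ S) = n - #S := by rw [card_univ_sdiff, Fintype.card_fin]
  rw [delWord, ← listMap_orderEmbOfFin_finRange _ hcard, List.map_map, ← List.ofFn_eq_map,
    unitWord]
  congr 1
  funext j
  simp only [Function.comp_apply, Pi.single_apply]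
  congr 1
  by_cases ha : a ∈ S
  · rw [posAfterDel, if_pos ha]
    have hj := orderEmbOfFin_mem _ hcard j
    exact propext ⟨fun h => absurd ha (mem_sdiff.1 (h ▸ hj)).2, fun h => absurd j.2 (by omega)⟩
  · rw [posAfterDel, if_neg ha, orderEmbOfFin_eq_iff hcard (by simpa using ha)]

theorem posAfterDel_eq_sub_card_iff {a : Fin n} {S : Finset (Fin n)} :
    posAfterDel a S = n - #S ↔ a ∈ S := by
  refine ⟨fun h => ?_, fun ha => if_pos ha⟩
  by_contra ha
  exact (posAfterDel_lt ha).ne h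

theorem card_filter_posAfterDel_eq_sub_card {t : ℕ} (ht : 1 ≤ t) (a : Fin n) :
    #{S ∈ powersetCard t (univ : Finset (Fin n)) | posAfterDel a S = n - t}
      = (n - 1).choose (t - 1) := by
  have hfilter : {S ∈ powersetCard t (univ : Finset (Fin n)) | posAfterDel a S = n - t}
      = {S ∈ powersetCard (1 + (t - 1)) (univ : Finset (Fin n)) | #{x ∈ S | x = a} = 1} := by
    rw [show 1 + (t - 1) = t by omega]
    refine filter_congr fun S hS => ?_
    rw [← (mem_powersetCard.1 hS).2, posAfterDel_eq_sub_card_iff, filter_eq']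
    split_ifs with ha <;> simp [ha]
  rw [hfilter, card_filter_powersetCard_card_filter, filter_eq', if_pos (mem_univ a),
    filter_ne', card_erase_of_mem (mem_univ a), card_univ, Fintype.card_fin, card_singleton,
    Nat.choose_one_right, one_mul]

theorem card_filter_posAfterDel_eq_sub {t k : ℕ} (a : Fin n) (hkt : k ≤ t) (hka : k ≤ a)
    (ha : a < n - t) :
    #{S ∈ powersetCard t (univ : Finset (Fin n)) | posAfterDel a S = a - k}
      = (a : ℕ).choose k * (n - 1 - a).choose (t - k) := by
  have hfilter : {S ∈ powersetCard t (univ : Finset (Fin n)) | posAfterDel a S = a - k}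
      = {S ∈ powersetCard (k + (t - k)) (univ.erase a) | #{x ∈ S | x < a} = k} := by
    ext S
    simp only [mem_filter, mem_powersetCard, subset_erase, show k + (t - k) = t by omega,
      subset_univ, true_and]
    refine ⟨fun ⟨hS, hpos⟩ => ?_, fun ⟨⟨ha, hS⟩, hk⟩ => ⟨hS, ?_⟩⟩
    · have haS : a ∉ S := fun haS => by
        rw [posAfterDel, if_pos haS, hS] at hpos
        omega
      have := posAfterDel_add_card_filter_lt haS
      exact ⟨⟨haS, hS⟩, by omega⟩
    · have := posAfterDel_add_card_filter_lt ha
      omega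
  have hbelow : #{x ∈ univ.erase a | x < a} = a := by
    rw [filter_erase, filter_gt_eq_Iio, erase_eq_of_notMem (by simp), Fin.card_Iio]
  have habove : #{x ∈ univ.erase a | ¬x < a} = n - 1 - a := by
    have := card_filter_add_card_filter_not (s := univ.erase a) (fun x => x < a)
    rw [card_erase_of_mem (mem_univ a), card_univ, Fintype.card_fin] at this
    omega
  rw [hfilter, card_filter_powersetCard_card_filter, hbelow, habove]

theorem filter_delWord_single_eq_unitWord {t c : ℕ} (a : Fin n) (hc : c ≤ n - t) :
    {S ∈ powersetCard t (univ : Finset (Fin n)) |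
        delWord (Pi.single a (1 : Fin 2)) S = unitWord (n - t) c}
      = {S ∈ powersetCard t (univ : Finset (Fin n)) | posAfterDel a S = c} := by
  refine filter_congr fun S hS => ?_
  have hS : #S = t := (mem_powersetCard.1 hS).2
  rw [delWord_single, hS]
  exact (unitWord_injOn _).eq_iff (hS ▸ posAfterDel_le a S) hc

theorem delWord_single_mem_of_eq_delWord_single {t : ℕ} {a a' : Fin n} (ha' : (a' : ℕ) = a + 1)
    {S S' : Finset (Fin n)} (hS : #S = t) (hS' : #S' = t)
    (h : delWord (Pi.single a (1 : Fin 2)) S = delWord (Pi.single a' (1 : Fin 2)) S') :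
    delWord (Pi.single a (1 : Fin 2)) S ∈ sharedOutputs (n - t) a t := by
  rw [delWord_single, delWord_single, hS, hS'] at h
  have hpos := unitWord_injOn _ (hS ▸ posAfterDel_le a S) (hS' ▸ posAfterDel_le a' S') h
  rw [delWord_single, hS, sharedOutputs, mem_insert, mem_image]
  by_cases haS : a ∈ S
  · left
    rw [posAfterDel, if_pos haS, hS]
  right
  have ha'S' : a' ∉ S' := fun ha'S' => by
    have := posAfterDel_lt haS
    rw [hpos, posAfterDel, if_pos ha'S'] at this
    omega
  have hbelow := posAfterDel_add_card_filter_lt haS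
  have hbelow' := posAfterDel_add_card_filter_lt ha'S'
  have hcard' : #{i ∈ S' | i < a'} ≤ t := hS' ▸ card_filter_le S' _
  exact ⟨#{i ∈ S | i < a}, mem_range.2 (by omega), congrArg _ (by omega)⟩

theorem sum_min_card_filter_delWord_single {q t : ℕ} (ht : 1 ≤ t) (htq : t ≤ q)
    {a a' : Fin (2 * q + 2)} (ha : (a : ℕ) = q) (ha' : (a' : ℕ) = q + 1) :
    ∑ b ∈ sharedOutputs (2 * q + 2 - t) a t,
      min #{S ∈ powersetCard t univ | delWord (Pi.single a (1 : Fin 2)) S = b}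
        #{S ∈ powersetCard t univ | delWord (Pi.single a' (1 : Fin 2)) S = b}
      = (2 * q + 2).choose t - q.choose (t / 2) * q.choose ((t + 1) / 2) := by
  set m := 2 * q + 2 - t with hm
  have hinj : Set.InjOn (fun k => unitWord (m) (a - k)) (range t) :=
    fun k hk k' hk' h => by
      have := unitWord_injOn _ (by simp; omega) (by simp; omega) h
      simp only [coe_range, Set.mem_Iio] at hk hk'
      omega
  have hnotMem : unitWord (m) (m)
      ∉ (range t).image fun k => unitWord (m) (a - k) := by
    simp only [mem_image, mem_range, not_exists, not_and]
    intro k hk h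
    have := unitWord_injOn _ (by simp; omega) (by simp) h
    omega
  rw [sharedOutputs, sum_insert hnotMem, sum_image hinj,
    filter_delWord_single_eq_unitWord a le_rfl, filter_delWord_single_eq_unitWord a' le_rfl,
    card_filter_posAfterDel_eq_sub_card ht, card_filter_posAfterDel_eq_sub_card ht, min_self]
  have hterm : ∀ k ∈ range t,
      min #{S ∈ powersetCard t univ | delWord (Pi.single a (1 : Fin 2)) S = unitWord m (a - k)}
        #{S ∈ powersetCard t univ | delWord (Pi.single a' (1 : Fin 2)) S = unitWord m (a - k)}
      = min (q.choose k * (q + 1).choose (t - k))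
          ((q + 1).choose (k + 1) * q.choose (t - (k + 1))) := fun k hk => by
    have hk := mem_range.1 hk
    rw [filter_delWord_single_eq_unitWord a (by omega),
      filter_delWord_single_eq_unitWord a' (by omega),
      card_filter_posAfterDel_eq_sub a (by omega) (by omega) (by omega),
      show (a : ℕ) - k = a' - (k + 1) by omega,
      card_filter_posAfterDel_eq_sub a' (by omega) (by omega) (by omega), ha, ha',
      show 2 * q + 2 - 1 - q = q + 1 by omega, show 2 * q + 2 - 1 - (q + 1) = q by omega]
  have hsum := Nat.sum_range_min_choose_mul_choose q t
  have hpascal := Nat.choose_succ_succ' (2 * q + 1) (t - 1)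
  rw [sum_congr rfl hterm, show 2 * q + 2 - 1 = 2 * q + 1 by omega]
  rw [show t - 1 + 1 = t by omega, show 2 * q + 1 + 1 = 2 * q + 2 by omega] at hpascal
  rw [hpascal, ← hsum, mul_comm (q.choose (t / 2))]
  omega

end SingleOne

/-- For even `n ≥ 2t+2`, `x1 = 0^{n/2-1} 1 0^{n/2}` (single `1` at 0-indexed position `n/2 - 1`)
and `x2 = 0^{n/2} 1 0^{n/2-1}` (single `1` at position `n/2`), with
`M = C(n,t) - C(n/2-1,⌊t/2⌋)·C(n/2-1,⌈t/2⌉)`: exactly `M` channels with distinct deletion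
vectors of weight exactly `t` can produce equal output multisets from `x1` and `x2`,
so exactly `M + 1` channels distinguish them in the multiset model. -/
theorem multiset_model_exact_channel_number_halfway
    (t n : ℕ) (ht : 1 ≤ t) (hn : 2 * t + 2 ≤ n) (heven : Even n) :
    let x1 : Fin n → Fin 2 := fun i => if (i : ℕ) = n / 2 - 1 then 1 else 0
    let x2 : Fin n → Fin 2 := fun i => if (i : ℕ) = n / 2 then 1 else 0
    let M := n.choose t - (n / 2 - 1).choose (t / 2) * (n / 2 - 1).choose ((t + 1) / 2)
    (∃ D1 D2 : Finset (Finset (Fin n)),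
      (∀ S ∈ D1, S.card = t) ∧ (∀ S ∈ D2, S.card = t) ∧
      D1.card = M ∧ D2.card = M ∧
      Multiset.map (delWord x1) D1.val = Multiset.map (delWord x2) D2.val) ∧
    (∀ D1 D2 : Finset (Finset (Fin n)),
      (∀ S ∈ D1, S.card = t) → (∀ S ∈ D2, S.card = t) →
      D1.card = D2.card →
      Multiset.map (delWord x1) D1.val = Multiset.map (delWord x2) D2.val →
      D1.card ≤ M) := by
  intro x1 x2 M
  obtain ⟨q, rfl⟩ : ∃ q, n = 2 * q + 2 := by
    obtain ⟨r, hr⟩ := heven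
    exact ⟨r - 1, by omega⟩
  have hhalf : (2 * q + 2) / 2 = q + 1 := by omega
  let a : Fin (2 * q + 2) := ⟨q, by omega⟩
  let a' : Fin (2 * q + 2) := ⟨q + 1, by omega⟩
  have hx1 : x1 = Pi.single a 1 := by
    funext i
    simp [x1, a, Pi.single_apply, Fin.ext_iff, hhalf]
  have hx2 : x2 = Pi.single a' 1 := by
    funext i
    simp [x2, a', Pi.single_apply, Fin.ext_iff, hhalf]
  have hM := sum_min_card_filter_delWord_single ht (by omega) (a := a) (a' := a') rfl rfl
  rw [← hx1, ← hx2, show (2 * q + 2).choose t - q.choose (t / 2) * q.choose ((t + 1) / 2) = M by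
    simp [M, hhalf]] at hM
  refine ⟨?_, fun D1 D2 h1 h2 _ hmap => ?_⟩
  · obtain ⟨D1, hD1, D2, hD2, hmap, hcard1, hcard2⟩ :=
      exists_map_eq_card_eq_sum_min_card_fiber (powersetCard t univ) (delWord x1) (delWord x2) _
    exact ⟨D1, D2, fun S hS => (mem_powersetCard.1 (hD1 hS)).2,
      fun S hS => (mem_powersetCard.1 (hD2 hS)).2, hcard1.trans hM, hcard2.trans hM, hmap⟩
  · rw [← hM]
    refine card_le_sum_min_card_fiber_of_map_eq (fun S hS S' hS' h => ?_)
      (fun S hS => mem_powersetCard.2 ⟨subset_univ S, h1 S hS⟩)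
      (fun S hS => mem_powersetCard.2 ⟨subset_univ S, h2 S hS⟩) hmap
    rw [hx1, hx2] at h
    rw [hx1]
    exact delWord_single_mem_of_eq_delWord_single rfl (mem_powersetCard.1 hS).2
      (mem_powersetCard.1 hS').2 h
end

section
/- Let t ≥ 1, n ≥ t+1 and 1 ≤ a ≤ n−1 be integers, and let K = ⌊(a·t + a)/n⌋. Then C(n−1, t−1) + Σ_{i=0}^{t−1} min{ C(a, i+1)·C(n−a−1, t−i−1), C(a−1, i)·C(n−a, t−i) } = C(n,t) − C(a−1, K)·C(n−a−1, t−K). -/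
open Finset

private lemma vand_aux (x y t : ℕ) :
    ∑ j ∈ Finset.range (t + 1), x.choose j * y.choose (t - j) = (x + y).choose t := by
  rw [Nat.add_choose_eq, Finset.Nat.sum_antidiagonal_eq_sum_range_succ_mk]

private lemma pascal_aux (B k : ℕ) (hk : 1 ≤ k) :
    (B + 1).choose k = B.choose (k - 1) + B.choose k := by
  obtain ⟨j, rfl⟩ : ∃ j, k = j + 1 := ⟨k - 1, by omega⟩
  simp [Nat.choose_succ_succ]

private lemma tele_aux (A B t : ℕ) : ∀ m, m < t →
    ∑ j ∈ Finset.range (m + 1), (A + 1).choose j * B.choose (t - j) +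
      A.choose m * B.choose (t - m - 1) =
    ∑ j ∈ Finset.range (m + 1), A.choose j * (B + 1).choose (t - j) := by
  intro m
  induction m with
  | zero =>
    intro h
    simp only [zero_add, Finset.sum_range_one, Nat.choose_zero_right, one_mul, Nat.sub_zero]
    have hp := pascal_aux B t h
    omega
  | succ m ih =>
    intro h
    have IH := ih (by omega)
    rw [Finset.sum_range_succ, Finset.sum_range_succ
      (fun j => A.choose j * (B + 1).choose (t - j))]
    have pascalA : (A + 1).choose (m + 1) = A.choose m + A.choose (m + 1) :=
      Nat.choose_succ_succ A m
    have pascalB : (B + 1).choose (t - (m + 1)) =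
        B.choose (t - (m + 1) - 1) + B.choose (t - (m + 1)) :=
      pascal_aux B _ (by omega)
    have e1 : t - (m + 1) = t - m - 1 := by omega
    rw [pascalA, pascalB, e1]
    ring_nf
    ring_nf at IH
    linarith

/-- The binomial identity from the proof of the exact channel number in the multiset model:
for `t ≥ 1`, `n ≥ t+1`, `1 ≤ a ≤ n-1` and `K = ⌊(at+a)/n⌋`,
`C(n-1,t-1) + ∑_{i=0}^{t-1} min(C(a,i+1)·C(n-a-1,t-i-1), C(a-1,i)·C(n-a,t-i))
  = C(n,t) - C(a-1,K)·C(n-a-1,t-K)`. -/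
theorem binomial_min_sum_identity
    (t n a : ℕ) (ht : 1 ≤ t) (hn : t + 1 ≤ n) (ha1 : 1 ≤ a) (ha2 : a ≤ n - 1) :
    (n - 1).choose (t - 1) +
      ∑ i ∈ Finset.range t,
        min (a.choose (i + 1) * (n - a - 1).choose (t - i - 1))
            ((a - 1).choose i * (n - a).choose (t - i)) =
    n.choose t - (a - 1).choose ((a * t + a) / n) * (n - a - 1).choose (t - (a * t + a) / n) := by
  obtain ⟨B, rfl⟩ : ∃ B, n = a + B + 1 := ⟨n - a - 1, by omega⟩
  obtain ⟨A, rfl⟩ : ∃ A, a = A + 1 := ⟨a - 1, by omega⟩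
  have e1 : A + 1 + B + 1 - 1 = A + B + 1 := by omega
  have e2 : A + 1 + B + 1 - (A + 1) - 1 = B := by omega
  have e3 : A + 1 + B + 1 - (A + 1) = B + 1 := by omega
  have e4 : A + 1 - 1 = A := by omega
  rw [e1, e2, e3, e4]
  obtain ⟨K, hKdef⟩ : ∃ K, ((A + 1) * t + (A + 1)) / (A + 1 + B + 1) = K := ⟨_, rfl⟩
  rw [hKdef]
  have hKt : K ≤ t := by
    have hpos : 0 < A + 1 + B + 1 := by omega
    have : K < t + 1 := by
      rw [← hKdef, Nat.div_lt_iff_lt_mul hpos]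
      nlinarith
    omega
  obtain ⟨X, hX⟩ : ∃ X, A.choose K * B.choose (t - K) = X := ⟨_, rfl⟩
  rw [hX]
  have hXle : X ≤ (A + 1 + B + 1).choose t := by
    rw [← hX]
    calc A.choose K * B.choose (t - K) ≤ (A + B).choose t := by
          rw [← vand_aux]
          exact Finset.single_le_sum (f := fun j => A.choose j * B.choose (t - j))
            (fun i _ => Nat.zero_le _) (Finset.mem_range.mpr (by omega))
      _ ≤ (A + 1 + B + 1).choose t := Nat.choose_le_choose t (by omega)
  suffices h : (A + B + 1).choose (t - 1) +
      (∑ i ∈ Finset.range t,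
        min ((A + 1).choose (i + 1) * B.choose (t - i - 1))
            (A.choose i * (B + 1).choose (t - i))) + X = (A + 1 + B + 1).choose t by
    omega
  -- key cross-multiplication identity
  have key : ∀ i, i < t →
      (i + 1) * (B + 1) * ((A + 1).choose (i + 1) * B.choose (t - i - 1)) =
      (A + 1) * (t - i) * (A.choose i * (B + 1).choose (t - i)) := by
    intro i hi
    have h1 : (A + 1) * A.choose i = (A + 1).choose (i + 1) * (i + 1) :=
      Nat.add_one_mul_choose_eq A i
    have h2 : (B + 1) * B.choose (t - i - 1) = (B + 1).choose (t - i - 1 + 1) * (t - i - 1 + 1) :=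
      Nat.add_one_mul_choose_eq B (t - i - 1)
    have e : t - i - 1 + 1 = t - i := by omega
    rw [e] at h2
    calc (i + 1) * (B + 1) * ((A + 1).choose (i + 1) * B.choose (t - i - 1))
        = ((A + 1).choose (i + 1) * (i + 1)) * ((B + 1) * B.choose (t - i - 1)) := by ring
      _ = ((A + 1) * A.choose i) * ((B + 1).choose (t - i) * (t - i)) := by rw [← h1, h2]
      _ = (A + 1) * (t - i) * (A.choose i * (B + 1).choose (t - i)) := by ring
  have hsum : ∑ i ∈ Finset.range t,
        min ((A + 1).choose (i + 1) * B.choose (t - i - 1))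
            (A.choose i * (B + 1).choose (t - i)) =
      ∑ i ∈ Finset.range K, A.choose i * (B + 1).choose (t - i) +
      ∑ i ∈ Finset.Ico K t, (A + 1).choose (i + 1) * B.choose (t - i - 1) := by
    rw [Finset.range_eq_Ico, ← Finset.sum_Ico_consecutive _ (Nat.zero_le K) hKt,
      ← Finset.range_eq_Ico]
    congr 1
    · apply Finset.sum_congr rfl
      intro i hi
      rw [Finset.mem_range] at hi
      have hit : i < t := by omega
      apply min_eq_right
      have hk := key i hit
      have hmulle : (i + 1) * (B + 1) ≤ (A + 1) * (t - i) := by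
        have hKn : K * (A + 1 + B + 1) ≤ (A + 1) * t + (A + 1) := by
          rw [← hKdef]; exact Nat.div_mul_le_self _ _
        have h5 : (i + 1) * (A + 1 + B + 1) ≤ K * (A + 1 + B + 1) :=
          Nat.mul_le_mul_right _ (by omega)
        obtain ⟨s, rfl⟩ : ∃ s, t = i + s + 1 := ⟨t - i - 1, by omega⟩
        have e : i + s + 1 - i = s + 1 := by omega
        rw [e]
        linarith
      have hpos : 0 < (A + 1) * (t - i) := by
        have : 0 < (i + 1) * (B + 1) := by positivity
        omega
      apply Nat.le_of_mul_le_mul_left _ hpos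
      calc (A + 1) * (t - i) * (A.choose i * (B + 1).choose (t - i))
          = (i + 1) * (B + 1) * ((A + 1).choose (i + 1) * B.choose (t - i - 1)) := hk.symm
        _ ≤ (A + 1) * (t - i) * ((A + 1).choose (i + 1) * B.choose (t - i - 1)) :=
            Nat.mul_le_mul_right _ hmulle
    · apply Finset.sum_congr rfl
      intro i hi
      rw [Finset.mem_Ico] at hi
      apply min_eq_left
      have hk := key i hi.2
      have hmulle : (A + 1) * (t - i) ≤ (i + 1) * (B + 1) := by
        have hKn : (A + 1) * t + (A + 1) < (i + 1) * (A + 1 + B + 1) := by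
          have h6 : ((A + 1) * t + (A + 1)) / (A + 1 + B + 1) < i + 1 := by omega
          rw [Nat.div_lt_iff_lt_mul (by omega : 0 < A + 1 + B + 1)] at h6
          exact h6
        obtain ⟨s, rfl⟩ : ∃ s, t = i + s + 1 := ⟨t - i - 1, by omega⟩
        have e : i + s + 1 - i = s + 1 := by omega
        rw [e]
        linarith
      have hpos : 0 < (i + 1) * (B + 1) := by positivity
      apply Nat.le_of_mul_le_mul_left _ hpos
      calc (i + 1) * (B + 1) * ((A + 1).choose (i + 1) * B.choose (t - i - 1))
          = (A + 1) * (t - i) * (A.choose i * (B + 1).choose (t - i)) := hk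
        _ ≤ (i + 1) * (B + 1) * (A.choose i * (B + 1).choose (t - i)) :=
            Nat.mul_le_mul_right _ hmulle
  rw [hsum]
  have pascalN : (A + 1 + B + 1).choose t
      = (A + B + 1).choose (t - 1) + (A + B + 1).choose t := by
    rw [show A + 1 + B + 1 = (A + B + 1) + 1 from by omega]
    exact pascal_aux _ _ ht
  have hX' : A.choose K * B.choose (t - K) = X := hX
  rcases eq_or_lt_of_le hKt with hK | hK
  · -- K = t
    subst hK
    rw [Finset.Ico_self, Finset.sum_empty, add_zero]
    have hx : X = A.choose K * (B + 1).choose (K - K) := by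
      rw [← hX']; simp
    rw [add_assoc, hx,
      ← Finset.sum_range_succ (fun i => A.choose i * (B + 1).choose (K - i)) K,
      vand_aux, show A + (B + 1) = A + B + 1 from by omega, pascalN]
  · -- K < t
    have tele := tele_aux A B t K hK
    have reindex : ∑ i ∈ Finset.Ico K t, (A + 1).choose (i + 1) * B.choose (t - i - 1) =
        ∑ j ∈ Finset.Ico (K + 1) (t + 1), (A + 1).choose j * B.choose (t - j) := by
      rw [Finset.sum_Ico_eq_sum_range, Finset.sum_Ico_eq_sum_range]
      have het : t + 1 - (K + 1) = t - K := by omega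
      rw [het]
      apply Finset.sum_congr rfl
      intro i hi
      have ea : K + i + 1 = K + 1 + i := by omega
      have eb : t - (K + i) - 1 = t - (K + 1 + i) := by omega
      rw [ea, eb]
    have split2 : ∑ j ∈ Finset.range (t + 1), (A + 1).choose j * B.choose (t - j) =
        ∑ j ∈ Finset.range (K + 1), (A + 1).choose j * B.choose (t - j) +
        ∑ j ∈ Finset.Ico (K + 1) (t + 1), (A + 1).choose j * B.choose (t - j) := by
      rw [Finset.range_eq_Ico, ← Finset.sum_Ico_consecutive _ (Nat.zero_le (K + 1))
        (by omega : K + 1 ≤ t + 1), ← Finset.range_eq_Ico]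
    have v1 : ∑ j ∈ Finset.range (t + 1), (A + 1).choose j * B.choose (t - j) =
        (A + 1 + B).choose t := vand_aux _ _ _
    rw [show A + 1 + B = A + B + 1 from by omega] at v1
    have v2 : ∑ j ∈ Finset.range (K + 1), A.choose j * (B + 1).choose (t - j) =
        ∑ j ∈ Finset.range K, A.choose j * (B + 1).choose (t - j) +
        A.choose K * (B + 1).choose (t - K) := Finset.sum_range_succ _ _
    have pB := pascal_aux B (t - K) (by omega)
    rw [pB, Nat.mul_add, hX'] at v2
    rw [reindex, pascalN]
    linarith [tele, split2, v1, v2]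
end

section
/- Let K and h be non-negative integers with K ≥ 3h − 1. Then Σ_{i=0}^{h} C(K, i) ≤ 2·C(K, h); that is, the binary Hamming ball volume V_2(K,h) is at most twice the top binomial coefficient C(K,h). -/
/-! For `i < h` the ratio `C(K, i+1) / C(K, i) = (K - i) / (i + 1)` is at least `2` exactly
because `K ≥ 3h - 1`, so read from the top the terms of the ball decay at least geometrically
with ratio `1/2` and sum to at most `2·C(K, h)`. -/

open Finset

theorem sum_range_succ_le_two_mul_of_two_mul_le {f : ℕ → ℕ} {h : ℕ}
    (hf : ∀ i < h, 2 * f i ≤ f (i + 1)) :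
    ∑ i ∈ range (h + 1), f i ≤ 2 * f h := by
  induction h with
  | zero => simpa using Nat.le_mul_of_pos_left (f 0) two_pos
  | succ h ih =>
    have hsum : ∑ i ∈ range (h + 1), f i ≤ 2 * f h := ih fun i hi => hf i (by omega)
    calc ∑ i ∈ range (h + 1 + 1), f i = ∑ i ∈ range (h + 1), f i + f (h + 1) :=
          sum_range_succ f (h + 1)
      _ ≤ f (h + 1) + f (h + 1) := by grw [hsum, hf h h.lt_succ_self]
      _ = 2 * f (h + 1) := (two_mul _).symm

theorem two_mul_choose_le_choose_succ {K i : ℕ} (hK : 3 * i + 2 ≤ K) :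
    2 * K.choose i ≤ K.choose (i + 1) := by
  have hratio : 2 * (i + 1) ≤ K - i := by omega
  refine Nat.le_of_mul_le_mul_right ?_ i.succ_pos
  calc 2 * K.choose i * (i + 1) = K.choose i * (2 * (i + 1)) := by ring
    _ ≤ K.choose i * (K - i) := Nat.mul_le_mul_left _ hratio
    _ = K.choose (i + 1) * (i + 1) := (Nat.choose_succ_right_eq K i).symm

/-- For non-negative integers `K ≥ 3h - 1`, the binary Hamming ball volume
`V₂(K,h) = ∑_{i=0}^{h} C(K,i)` is at most `2·C(K,h)`. -/
theorem hamming_ball_le_two_mul_top_binom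
    (K h : ℕ) (hKh : 3 * h - 1 ≤ K) :
    ∑ i ∈ Finset.range (h + 1), K.choose i ≤ 2 * K.choose h :=
  sum_range_succ_le_two_mul_of_two_mul_le fun _ hi =>
    two_mul_choose_le_choose_succ (by omega)
end
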